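/- arXiv:1202.2277 — 4 statements merged into one kernel-verified Lean document; each statement's English description precedes it below -/
import Mathlib

section
/- Let a < 1 be a real number, let μ ∈ ℝ, and let F be a probability measure on ℝ supported in [a,1]. Then D_inf(F,μ;𝒜_a) = D_inf(F,μ;𝒜); that is, the infimum of D(F‖G) over probability measures G supported in [a,1] with E(G) > μ equals the infimum of D(F‖G) over probability measures G supported in (-∞,1] with E(G) > μ. -/
open MeasureTheory ProbabilityTheory Set Filter
open scoped ENNReal NNReal Classical BoundedContinuousFunction

noncomputable section

/-- Kullback–Leibler divergence `D(F‖G)` between measures on ℝ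
(`+∞` unless `F ≪ G` and `log (dF/dG)` is `F`-integrable). -/
def KL (F G : Measure ℝ) : ℝ≥0∞ :=
  if F ≪ G ∧ Integrable (fun x => Real.log (F.rnDeriv G x).toReal) F
  then ENNReal.ofReal (∫ x, Real.log (F.rnDeriv G x).toReal ∂F) else ⊤

/-- `D_inf(F,μ;𝒜)`: infimum of `D(F‖G)` over probability measures `G` supported in
`(-∞,1]` with (finite) mean `E(G) > μ`.  (For `G` supported in `(-∞,1]` the mean is
well defined in `[-∞,1]`, and `E(G) > μ` holds iff `G` has integrable identity with
`∫ x dG > μ`.) -/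
def DinfSemi (F : Measure ℝ) (μ : ℝ) : ℝ≥0∞ :=
  ⨅ G ∈ {G : Measure ℝ | IsProbabilityMeasure G ∧ G (Set.Ioi 1) = 0 ∧
      Integrable (fun x : ℝ => x) G ∧ μ < ∫ x, x ∂G}, KL F G

/-- `D_inf(F,μ;𝒜_a)`: infimum of `D(F‖G)` over probability measures `G` supported in
`[a,1]` with mean `E(G) > μ`. -/
def DinfBdd (a : ℝ) (F : Measure ℝ) (μ : ℝ) : ℝ≥0∞ :=
  ⨅ G ∈ {G : Measure ℝ | IsProbabilityMeasure G ∧ G (Set.Icc a 1) = 1 ∧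
      μ < ∫ x, x ∂G}, KL F G

/-- `L(ν;F,μ) = ∫ log(1-(x-μ)ν) dF(x)`, as an extended real number in `[-∞,∞)`:
the value is `⊥ = -∞` when the integrand equals `-∞` on a non-`F`-null set or when
its (necessarily negative, for `F` supported in `(-∞,1]` with finite mean) part fails
to be integrable. -/
def LL (F : Measure ℝ) (μ ν : ℝ) : EReal :=
  if Integrable (fun x => Real.log (1 - (x - μ) * ν)) F ∧ F {x | 1 - (x - μ) * ν ≤ 0} = 0
  then ((∫ x, Real.log (1 - (x - μ) * ν) ∂F : ℝ) : EReal)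
  else ⊥

/-- `D̃_inf(F,μ) = sup_{0 ≤ ν ≤ 1/(1-μ)} L(ν;F,μ)`. -/
def Dtilde (F : Measure ℝ) (μ : ℝ) : EReal :=
  ⨆ ν ∈ Set.Icc (0 : ℝ) (1 - μ)⁻¹, LL F μ ν

/-- The moment generating function of `F` is finite in a neighborhood of the origin. -/
def MGFNearZero (F : Measure ℝ) : Prop :=
  ∃ ε > (0 : ℝ), ∀ l : ℝ, |l| < ε → Integrable (fun x => Real.exp (l * x)) F

/-- Fenchel–Legendre transform `Λ*(x) = sup_λ {λx - log ∫ e^{λu} dF(u)}` of the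
logarithmic moment generating function of `F`. -/
def Legendre (F : Measure ℝ) (x : ℝ) : EReal :=
  ⨆ l : ℝ, ((l * x : ℝ) : EReal) -
    ENNReal.log (∫⁻ y, ENNReal.ofReal (Real.exp (l * y)) ∂F)

/-- Empirical distribution `F̂_t = (1/t) ∑_{i<t} δ_{X_i}`. -/
def empMeas {Ω : Type*} [MeasurableSpace Ω] (X : ℕ → Ω → ℝ) (t : ℕ) (ω : Ω) : Measure ℝ :=
  (t : ℝ≥0∞)⁻¹ • ∑ i ∈ Finset.range t, Measure.dirac (X i ω)

/-- Empirical mean `μ̂_t = (1/t) ∑_{i<t} X_i`. -/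
def empMean {Ω : Type*} (X : ℕ → Ω → ℝ) (t : ℕ) (ω : Ω) : ℝ :=
  (∑ i ∈ Finset.range t, X i ω) / t

end

/-!
If `G` is supported in `(-∞,1]` and `D(F‖G) < ∞`, then `G([a,1]) > 0` and the conditioned
measure `G[|[a,1]]` is supported in `[a,1]`. Since `F` lives on `[a,1]`,
`D(F‖G[|[a,1]]) = D(F‖G) + log G([a,1]) ≤ D(F‖G)`, and conditioning away the mass below `a`
can only raise the mean. The reverse inequality is the inclusion `𝒜_a ⊆ 𝒜`.
-/

lemma absolutelyContinuous_of_KL_ne_top {F G : Measure ℝ} (h : KL F G ≠ ⊤) : F ≪ G := by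
  by_contra hac
  exact h (if_neg (not_and_of_not_left _ hac))

lemma withDensity_cond_rnDeriv_eq {α : Type*} [MeasurableSpace α] {F G : Measure α}
    [IsFiniteMeasure G] [F.HaveLebesgueDecomposition G] {S : Set α} (hS : MeasurableSet S)
    (hGS : G S ≠ 0) (hac : F ≪ G) (hFS : F Sᶜ = 0) :
    G[|S].withDensity (G S • F.rnDeriv G) = F := by
  rw [ProbabilityTheory.cond, withDensity_smul_measure,
    withDensity_smul _ (Measure.measurable_rnDeriv F G), smul_smul,
    ENNReal.inv_mul_cancel hGS (measure_ne_top G S), one_smul,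
    ← restrict_withDensity hS, Measure.withDensity_rnDeriv_eq F G hac]
  exact Measure.restrict_eq_self_of_ae_mem (mem_ae_iff.2 hFS)

lemma KL_cond_le {F G : Measure ℝ} [IsProbabilityMeasure F] [IsProbabilityMeasure G]
    {S : Set ℝ} (hS : MeasurableSet S) (hFS : F S = 1) : KL F G[|S] ≤ KL F G := by
  by_cases hKL : F ≪ G ∧ Integrable (fun x => Real.log (F.rnDeriv G x).toReal) F
  swap
  · simp only [KL, if_neg hKL, le_top]
  obtain ⟨hac, hint⟩ := hKL
  have hFSc : F Sᶜ = 0 := (prob_compl_eq_zero_iff hS).2 hFS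
  have hGS : G S ≠ 0 := fun h => by simpa [hFS] using hac h
  have hF := withDensity_cond_rnDeriv_eq hS hGS hac hFSc
  have hac' : F ≪ G[|S] := hF ▸ withDensity_absolutelyContinuous _ _
  have hrn : F.rnDeriv G[|S] =ᵐ[F] G S • F.rnDeriv G := hac'.ae_le <| by
    nth_rewrite 1 [← hF]
    exact Measure.rnDeriv_withDensity _ ((Measure.measurable_rnDeriv F G).const_smul (G S))
  have hlog : (fun x => Real.log (F.rnDeriv G[|S] x).toReal)
      =ᵐ[F] fun x => Real.log (G.real S) + Real.log (F.rnDeriv G x).toReal := by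
    filter_upwards [hrn, Measure.rnDeriv_pos hac, hac.ae_le (Measure.rnDeriv_lt_top F G)]
      with x hx hpos hfin
    rw [hx, Pi.smul_apply, smul_eq_mul, ENNReal.toReal_mul, ← measureReal_def,
      Real.log_mul (x := G.real S) (ENNReal.toReal_pos hGS (measure_ne_top G S)).ne'
        (ENNReal.toReal_pos hpos.ne' hfin.ne).ne']
  have hint' := ((integrable_const _).add hint).congr hlog.symm
  have hlog_nonpos : Real.log (G.real S) ≤ 0 := Real.log_nonpos measureReal_nonneg measureReal_le_one
  simp only [KL, if_pos (And.intro hac' hint'), if_pos (And.intro hac hint)]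
  refine ENNReal.ofReal_le_ofReal ?_
  rw [integral_congr_ae hlog, integral_add (integrable_const _) hint, integral_const,
    probReal_univ, one_smul]
  linarith

lemma integral_id_le_integral_cond {G : Measure ℝ} [IsProbabilityMeasure G] {S : Set ℝ}
    {a : ℝ} (hS : MeasurableSet S) (hGS : G S ≠ 0) (hint : Integrable (fun x => x) G)
    (h_ge : ∀ x ∈ S, a ≤ x) (h_le : ∀ᵐ x ∂G, x ∉ S → x ≤ a) :
    ∫ x, x ∂G ≤ ∫ x, x ∂G[|S] := by
  have hr0 : 0 < G.real S := ENNReal.toReal_pos hGS (measure_ne_top G S)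
  have hm : ∫ x in S, x ∂G = G.real S * ∫ x, x ∂G[|S] := by
    rw [ProbabilityTheory.cond, integral_smul_measure, ENNReal.toReal_inv, smul_eq_mul,
      ← measureReal_def, mul_inv_cancel_left₀ hr0.ne']
  set r := G.real S
  set m := ∫ x, x ∂G[|S]
  have hr1 : r ≤ 1 := measureReal_le_one
  have ha_le : a * r ≤ r * m := by
    rw [← hm, mul_comm, ← smul_eq_mul, ← setIntegral_const]
    exact setIntegral_mono_on (integrableOn_const (measure_ne_top G S)) hint.integrableOn hS h_ge
  have hcompl : ∫ x in Sᶜ, x ∂G ≤ a * (1 - r) := by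
    have := setIntegral_mono_on_ae hint.integrableOn (integrableOn_const (measure_ne_top G Sᶜ))
      hS.compl (by filter_upwards [h_le] with x hx h using hx h)
    rwa [setIntegral_const, probReal_compl_eq_one_sub hS, smul_eq_mul, mul_comm] at this
  have ham : a ≤ m := le_of_mul_le_mul_right (by linarith) hr0
  rw [← integral_add_compl hS hint, hm]
  nlinarith

lemma measure_Ioi_eq_zero_and_integrable_of_measure_Icc_eq_one {G : Measure ℝ}
    [IsProbabilityMeasure G] {a : ℝ} (hG : G (Icc a 1) = 1) :
    G (Ioi 1) = 0 ∧ Integrable (fun x => x) G := by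
  have hmem : ∀ᵐ x ∂G, x ∈ Icc a 1 := (mem_ae_iff_prob_eq_one measurableSet_Icc).2 hG
  refine ⟨measure_eq_zero_iff_ae_notMem.2 ?_, .of_mem_Icc a 1 aemeasurable_id hmem⟩
  filter_upwards [hmem] with x hx using not_lt.2 hx.2

theorem stmt0_general (a : ℝ) (μ : ℝ) (F : Measure ℝ) [IsProbabilityMeasure F]
    (hF : F (Set.Icc a 1) = 1) :
    DinfBdd a F μ = DinfSemi F μ := by
  refine le_antisymm (le_iInf₂ fun G ⟨hG, hG1, hGint, hGμ⟩ => ?_)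
    (le_iInf₂ fun G ⟨hG, hGS, hGμ⟩ => ?_)
  swap
  · obtain ⟨hG1, hGint⟩ := measure_Ioi_eq_zero_and_integrable_of_measure_Icc_eq_one hGS
    exact iInf₂_le G ⟨hG, hG1, hGint, hGμ⟩
  rcases eq_or_ne (KL F G) ⊤ with hKL | hKL
  · exact hKL ▸ le_top
  have hGS : G (Icc a 1) ≠ 0 := fun h => by
    simpa [hF] using absolutelyContinuous_of_KL_ne_top hKL h
  have h_le : ∀ᵐ x ∂G, x ∉ Icc a 1 → x ≤ a := by
    filter_upwards [measure_eq_zero_iff_ae_notMem.1 hG1] with x hx1 hx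
    by_contra hax
    exact hx ⟨(not_le.1 hax).le, not_lt.1 hx1⟩
  have hmean := integral_id_le_integral_cond measurableSet_Icc hGS hGint (fun _ hx => hx.1) h_le
  refine (iInf₂_le G[|Icc a 1] ⟨cond_isProbabilityMeasure hGS,
    cond_apply_self hGS (measure_ne_top G _), hGμ.trans_le hmean⟩).trans ?_
  exact KL_cond_le measurableSet_Icc hF

/-- For `a < 1`, `μ ∈ ℝ` and a probability measure `F` supported in
`[a,1]`, the infimum of `D(F‖G)` over probability measures `G` supported in `[a,1]`
with `E(G) > μ` equals the infimum over probability measures `G` supported in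
`(-∞,1]` with `E(G) > μ`. -/
theorem stmt0 (a : ℝ) (ha : a < 1) (μ : ℝ) (F : Measure ℝ) [IsProbabilityMeasure F]
    (hF : F (Set.Icc a 1) = 1) :
    DinfBdd a F μ = DinfSemi F μ :=
  stmt0_general a μ F hF
end

section
/- Let F be a probability measure on ℝ supported in (-∞,1] whose moment generating function is finite in a neighborhood of 0, and let μ < 1. Then D_inf(F,μ;𝒜) = D̃_inf(F,μ); that is, inf{D(F‖G) : G a probability measure supported in (-∞,1] with E(G) > μ} = sup_{0≤ν≤1/(1−μ)} ∫ log(1−(x−μ)ν) dF(x). -/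
open MeasureTheory ProbabilityTheory Set Filter
open scoped ENNReal NNReal Classical BoundedContinuousFunction

/-!
For admissible `G` and `0 ≤ ν ≤ 1/(1-μ)`, the function `h(x) = 1 - (x-μ)ν` is nonnegative on
`(-∞,1]` with `∫ h dG = 1 - (E(G)-μ)ν ≤ 1`. Integrating `log h - log (dF/dG) ≤ h/(dF/dG) - 1`
against `F` gives `L(ν) ≤ D(F‖G)`, hence `D̃_inf ≤ D_inf`.

Conversely, for `0 < c < 1` an intermediate value argument in `ν` produces `ν` for which
`G = (c/h)·F + (1 - ∫ c/h dF)·δ₁` is a probability measure on `(-∞,1]` with mean `> μ`.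
Since `G ≥ (c/h)·F`, we get `dF/dG ≤ h/c`, so `D(F‖G) ≤ L(ν) - log c ≤ D̃_inf - log c`;
letting `c → 1` gives `D_inf ≤ D̃_inf`.
-/

section General

variable {α : Type*} [MeasurableSpace α] {μ ν : Measure α}

lemma integrable_log_of_le [IsFiniteMeasure μ] {f : α → ℝ} {δ : ℝ} (hf : Integrable f μ)
    (hδ : 0 < δ) (hδf : ∀ᵐ x ∂μ, δ ≤ f x) : Integrable (fun x => Real.log (f x)) μ := by
  refine (hf.norm.add (integrable_const |Real.log δ|)).mono'
    (Real.measurable_log.comp_aemeasurable hf.aemeasurable).aestronglyMeasurable ?_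
  filter_upwards [hδf] with x hx
  have hfx : 0 < f x := hδ.trans_le hx
  have hlow : Real.log δ ≤ Real.log (f x) := Real.log_le_log hδ hx
  have hupp : Real.log (f x) ≤ f x - 1 := Real.log_le_sub_one_of_pos hfx
  simp only [Pi.add_apply, Real.norm_eq_abs, abs_of_pos hfx, abs_le]
  constructor <;> linarith [neg_abs_le (Real.log δ), le_abs_self (Real.log δ)]

lemma rnDeriv_le_of_le_withDensity [SigmaFinite ν] {f : α → ℝ≥0∞}
    (h : μ ≤ ν.withDensity f) : μ.rnDeriv ν ≤ᵐ[ν] f :=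
  ae_le_of_forall_setLIntegral_le_of_sigmaFinite (μ.measurable_rnDeriv ν) fun s hs _ =>
    (Measure.setLIntegral_rnDeriv_le s).trans ((h s).trans (withDensity_apply f hs).le)

lemma le_withDensity_inv_of_withDensity_le {w : α → ℝ≥0∞} (hw : Measurable w)
    (hw0 : ∀ᵐ x ∂μ, w x ≠ 0) (hw_top : ∀ᵐ x ∂μ, w x ≠ ∞) (h : μ.withDensity w ≤ ν) :
    μ ≤ ν.withDensity w⁻¹ := by
  have hμ : (μ.withDensity w).withDensity w⁻¹ = μ := by
    rw [← withDensity_mul μ hw hw.inv]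
    calc μ.withDensity (w * w⁻¹) = μ.withDensity 1 := by
          refine withDensity_congr_ae ?_
          filter_upwards [hw0, hw_top] with x h0 htop
          exact ENNReal.mul_inv_cancel h0 htop
      _ = μ := withDensity_one
  rw [← hμ, Measure.le_iff]
  intro s hs
  rw [withDensity_apply _ hs, withDensity_apply _ hs]
  exact lintegral_mono' (Measure.restrict_mono subset_rfl h) le_rfl

lemma integral_log_le_integral_llr [IsProbabilityMeasure μ] [SigmaFinite ν] (hμν : μ ≪ ν)
    (h_int : Integrable (llr μ ν) μ) {f : α → ℝ} (hf : Measurable f) (hf_pos : ∀ᵐ x ∂μ, 0 < f x)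
    (hf_log : Integrable (fun x => Real.log (f x)) μ) (hf_nonneg : ∀ᵐ x ∂ν, 0 ≤ f x)
    (hf_int : Integrable f ν) (hf_le : ∫ x, f x ∂ν ≤ 1) :
    ∫ x, Real.log (f x) ∂μ ≤ ∫ x, llr μ ν x ∂μ := by
  set ρ : α → ℝ := fun x => (μ.rnDeriv ν x).toReal
  set k : α → ℝ := fun x => f x / ρ x
  have hρk : ∀ᵐ x ∂ν, 0 ≤ ρ x * k x ∧ ρ x * k x ≤ f x := by
    filter_upwards [hf_nonneg] with x hx
    rcases eq_or_ne (ρ x) 0 with h0 | h0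
    · simp [k, h0, hx]
    · simp [k, mul_div_cancel₀ _ h0, hx]
  have hk_int : Integrable k μ := by
    refine (integrable_toReal_rnDeriv_mul_iff hμν).1 (hf_int.mono' (by fun_prop) ?_)
    filter_upwards [hρk] with x hx
    rw [Real.norm_eq_abs, abs_of_nonneg hx.1]
    exact hx.2
  have hk_le : ∫ x, k x ∂μ ≤ 1 := by
    rw [← integral_toReal_rnDeriv_mul hμν]
    exact (integral_mono_ae ((integrable_toReal_rnDeriv_mul_iff hμν).2 hk_int) hf_int
      (hρk.mono fun x hx => hx.2)).trans hf_le
  have hpt : ∀ᵐ x ∂μ, Real.log (f x) - llr μ ν x ≤ k x - 1 := by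
    filter_upwards [hf_pos, Measure.rnDeriv_pos hμν, hμν.ae_le (Measure.rnDeriv_lt_top μ ν)]
      with x hfx hρ0 hρtop
    have hρx : 0 < ρ x := ENNReal.toReal_pos hρ0.ne' hρtop.ne
    rw [llr, ← Real.log_div hfx.ne' hρx.ne']
    exact Real.log_le_sub_one_of_pos (div_pos hfx hρx)
  have := integral_mono_ae (f := fun x => Real.log (f x) - llr μ ν x) (g := fun x => k x - 1)
    (hf_log.sub h_int) (hk_int.sub (integrable_const 1)) hpt
  rw [integral_sub hf_log h_int, integral_sub hk_int (integrable_const 1)] at this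
  simp only [integral_const, probReal_univ, smul_eq_mul, one_mul] at this
  linarith

lemma integrable_llr_of_ae_le [IsFiniteMeasure μ] [IsFiniteMeasure ν] (hμν : μ ≪ ν)
    {g : α → ℝ} (hg : Integrable g μ) (hle : llr μ ν ≤ᵐ[μ] g) : Integrable (llr μ ν) μ := by
  rw [← InformationTheory.integrable_klFun_rnDeriv_iff hμν]
  have hle' : ∀ᵐ x ∂ν, μ.rnDeriv ν x ≠ 0 → llr μ ν x ≤ g x := by
    rwa [← ae_withDensity_iff (μ.measurable_rnDeriv ν), Measure.withDensity_rnDeriv_eq μ ν hμν]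
  refine (((integrable_toReal_rnDeriv_mul_iff hμν).2 hg.abs).add (integrable_const 1)).mono'
    (InformationTheory.measurable_klFun.comp
      (μ.measurable_rnDeriv ν).ennreal_toReal).aestronglyMeasurable ?_
  filter_upwards [hle'] with x hx
  have hρ : 0 ≤ (μ.rnDeriv ν x).toReal := ENNReal.toReal_nonneg
  rw [Pi.add_apply, Real.norm_eq_abs, abs_of_nonneg (InformationTheory.klFun_nonneg hρ),
    InformationTheory.klFun_apply]
  rcases eq_or_ne (μ.rnDeriv ν x).toReal 0 with h0 | h0
  · simp [h0]
  · have hlog : llr μ ν x ≤ |g x| := (hx fun h => h0 (by simp [h])).trans (le_abs_self _)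
    rw [llr] at hlog
    nlinarith [mul_le_mul_of_nonneg_left hlog hρ]

lemma KL_le_of_llr_le {F G : Measure ℝ} [IsFiniteMeasure F] [IsFiniteMeasure G] (hFG : F ≪ G)
    {g : ℝ → ℝ} (hg : Integrable g F) (hle : llr F G ≤ᵐ[F] g) :
    KL F G ≤ ENNReal.ofReal (∫ x, g x ∂F) := by
  have h_int := integrable_llr_of_ae_le hFG hg hle
  rw [KL, if_pos ⟨hFG, h_int⟩]
  exact ENNReal.ofReal_le_ofReal (integral_mono_ae h_int hg hle)

lemma KL_le_of_withDensity_le {F G : Measure ℝ} [IsFiniteMeasure F] [IsFiniteMeasure G]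
    {w : ℝ → ℝ} (hw : Measurable w) (hw_pos : ∀ᵐ x ∂F, 0 < w x)
    (hw_log : Integrable (fun x => Real.log (w x)) F)
    (h : F.withDensity (fun x => ENNReal.ofReal (w x)) ≤ G) :
    KL F G ≤ ENNReal.ofReal (-∫ x, Real.log (w x) ∂F) := by
  have hle : F ≤ G.withDensity (fun x => ENNReal.ofReal (w x))⁻¹ :=
    le_withDensity_inv_of_withDensity_le (by fun_prop)
      (hw_pos.mono fun x hx => (ENNReal.ofReal_pos.2 hx).ne')
      (ae_of_all _ fun _ => ENNReal.ofReal_ne_top) h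
  have hFG : F ≪ G :=
    (Measure.absolutelyContinuous_of_le hle).trans (withDensity_absolutelyContinuous _ _)
  rw [← integral_neg]
  refine KL_le_of_llr_le hFG hw_log.neg ?_
  filter_upwards [hFG.ae_le (rnDeriv_le_of_le_withDensity hle), Measure.rnDeriv_pos hFG,
    hFG.ae_le (Measure.rnDeriv_lt_top F G), hw_pos] with x hρ hρ0 hρtop hwx
  rw [llr, ← Real.log_inv]
  refine Real.log_le_log (ENNReal.toReal_pos hρ0.ne' hρtop.ne) ?_
  simpa [ENNReal.toReal_inv, ENNReal.toReal_ofReal hwx.le] using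
    ENNReal.toReal_mono (by simpa using hwx) hρ

end General

lemma ae_le_one_of_measure_Ioi_eq_zero {F : Measure ℝ} (hF : F (Ioi 1) = 0) :
    ∀ᵐ x ∂F, x ≤ 1 :=
  (measure_eq_zero_iff_ae_notMem.1 hF).mono fun _ hx => not_lt.1 hx

lemma MGFNearZero.integrable_id {F : Measure ℝ} (h : MGFNearZero F) :
    Integrable (fun x => x) F := by
  obtain ⟨ε, hε, hexp⟩ := h
  refine integrable_of_mem_interior_integrableExpSet (mem_interior_iff_mem_nhds.2 ?_)
  exact Filter.mem_of_superset (Metric.ball_mem_nhds 0 hε) fun l hl => hexp l (by simpa using hl)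

/-- With `W ν = ∫ c / (1 - (x - μ) ν) dF` and `β = 1 - μ`, the two conclusions say that
`withDensityAddDiracOne F (fun x => c / (1 - (x - μ) ν))` is a probability measure with
mean `> μ`. -/
lemma exists_mem_Ioc_le_one_and_pos {W : ℝ → ℝ} {b β c : ℝ} (hW : ContinuousOn W (Icc 0 b))
    (hW0 : W 0 = c) (hWb : 0 ≤ W b) (hc1 : c < 1) (hcb : c < b * β) (hbβ : b * β ≤ 1)
    (hb : 0 < b) : ∃ ν ∈ Ioc 0 b, W ν ≤ 1 ∧ 0 < (W ν - c) / ν + (1 - W ν) * β := by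
  by_cases hWb1 : W b ≤ 1
  · refine ⟨b, ⟨hb, le_rfl⟩, hWb1, ?_⟩
    rw [div_add' _ _ _ hb.ne']
    exact div_pos (by nlinarith [mul_nonneg hWb (sub_nonneg.2 hbβ)]) hb
  · obtain ⟨ν, hν, hWν⟩ :=
      intermediate_value_Icc hb.le hW ⟨hW0 ▸ hc1.le, (not_le.1 hWb1).le⟩
    have hν0 : 0 < ν := hν.1.lt_of_ne (by rintro rfl; linarith)
    refine ⟨ν, ⟨hν0, hν.2⟩, hWν.le, ?_⟩
    rw [hWν, sub_self, zero_mul, add_zero]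
    exact div_pos (sub_pos.2 hc1) hν0

noncomputable def withDensityAddDiracOne (F : Measure ℝ) (w : ℝ → ℝ) : Measure ℝ :=
  F.withDensity (fun x => ENNReal.ofReal (w x)) + ENNReal.ofReal (1 - ∫ x, w x ∂F) • Measure.dirac 1

section WithDensityAddDiracOne

variable {F : Measure ℝ} {w : ℝ → ℝ}

lemma isProbabilityMeasure_withDensityAddDiracOne [IsProbabilityMeasure F]
    (hw_nonneg : 0 ≤ᵐ[F] w) (hw_int : Integrable w F) (hw_le : ∫ x, w x ∂F ≤ 1) :
    IsProbabilityMeasure (withDensityAddDiracOne F w) := by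
  constructor
  rw [withDensityAddDiracOne, Measure.add_apply, Measure.smul_apply,
    withDensity_apply _ MeasurableSet.univ, Measure.restrict_univ,
    ← ofReal_integral_eq_lintegral_ofReal hw_int hw_nonneg, measure_univ, smul_eq_mul, mul_one,
    ← ENNReal.ofReal_add (integral_nonneg_of_ae hw_nonneg) (sub_nonneg.2 hw_le),
    add_sub_cancel, ENNReal.ofReal_one]

lemma withDensityAddDiracOne_Ioi_one (hF : F (Ioi 1) = 0) :
    withDensityAddDiracOne F w (Ioi 1) = 0 := by
  simp [withDensityAddDiracOne, withDensity_apply _ measurableSet_Ioi,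
    setLIntegral_measure_zero _ _ hF]

lemma withDensity_le_withDensityAddDiracOne :
    F.withDensity (fun x => ENNReal.ofReal (w x)) ≤ withDensityAddDiracOne F w :=
  Measure.le_add_right le_rfl

lemma integrable_withDensity_ofReal_id (hw : Measurable w) (hw_nonneg : 0 ≤ᵐ[F] w)
    (hxw : Integrable (fun x => w x * x) F) :
    Integrable (fun x => x) (F.withDensity fun x => ENNReal.ofReal (w x)) := by
  rw [integrable_withDensity_iff_integrable_smul' (by fun_prop)
    (ae_of_all _ fun _ => ENNReal.ofReal_lt_top)]
  refine hxw.congr ?_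
  filter_upwards [hw_nonneg] with x hx
  rw [ENNReal.toReal_ofReal hx, smul_eq_mul]

lemma integrable_id_withDensityAddDiracOne (hw : Measurable w) (hw_nonneg : 0 ≤ᵐ[F] w)
    (hxw : Integrable (fun x => w x * x) F) :
    Integrable (fun x => x) (withDensityAddDiracOne F w) :=
  (integrable_withDensity_ofReal_id hw hw_nonneg hxw).add_measure
    ((integrable_dirac (by simp)).smul_measure ENNReal.ofReal_ne_top)

lemma integral_id_withDensityAddDiracOne (hw : Measurable w) (hw_nonneg : 0 ≤ᵐ[F] w)
    (hxw : Integrable (fun x => w x * x) F) (hw_le : ∫ x, w x ∂F ≤ 1) :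
    ∫ x, x ∂(withDensityAddDiracOne F w) = ∫ x, w x * x ∂F + (1 - ∫ x, w x ∂F) := by
  rw [withDensityAddDiracOne,
    integral_add_measure (integrable_withDensity_ofReal_id hw hw_nonneg hxw)
    ((integrable_dirac (by simp)).smul_measure ENNReal.ofReal_ne_top), integral_smul_measure,
    integral_dirac, integral_withDensity_eq_integral_toReal_smul (by fun_prop)
    (ae_of_all _ fun _ => ENNReal.ofReal_lt_top), ENNReal.toReal_ofReal (sub_nonneg.2 hw_le)]
  congr 1
  · refine integral_congr_ae ?_
    filter_upwards [hw_nonneg] with x hx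
    rw [ENNReal.toReal_ofReal hx, smul_eq_mul]
  · simp

end WithDensityAddDiracOne

section Tilting

variable {F : Measure ℝ} {μ ν : ℝ}

lemma ae_one_sub_mul_le (hF1 : ∀ᵐ x ∂F, x ≤ 1) (hν : 0 ≤ ν) :
    ∀ᵐ x ∂F, 1 - ν * (1 - μ) ≤ 1 - (x - μ) * ν :=
  hF1.mono fun x hx => by nlinarith

lemma integrable_log_one_sub_mul [IsFiniteMeasure F] (hF1 : ∀ᵐ x ∂F, x ≤ 1)
    (hFint : Integrable (fun x => x) F) (hν : 0 ≤ ν) (hνμ : ν * (1 - μ) < 1) :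
    Integrable (fun x => Real.log (1 - (x - μ) * ν)) F :=
  integrable_log_of_le ((integrable_const 1).sub ((hFint.sub (integrable_const μ)).mul_const ν))
    (sub_pos.2 hνμ) (ae_one_sub_mul_le hF1 hν)

lemma LL_zero : LL F μ 0 = 0 := by
  norm_num [LL]

lemma LL_eq_integral [IsFiniteMeasure F] (hF1 : ∀ᵐ x ∂F, x ≤ 1)
    (hFint : Integrable (fun x => x) F) (hν : 0 ≤ ν) (hνμ : ν * (1 - μ) < 1) :
    LL F μ ν = ((∫ x, Real.log (1 - (x - μ) * ν) ∂F : ℝ) : EReal) := by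
  refine if_pos ⟨integrable_log_one_sub_mul hF1 hFint hν hνμ,
    measure_eq_zero_iff_ae_notMem.2 ?_⟩
  filter_upwards [ae_one_sub_mul_le hF1 hν] with x hx
  simp only [not_le]
  linarith

lemma LL_le_KL [IsProbabilityMeasure F] {G : Measure ℝ} [IsProbabilityMeasure G]
    (hG1 : G (Ioi 1) = 0) (hGint : Integrable (fun x => x) G) (hGmean : μ < ∫ x, x ∂G)
    (hμ : μ < 1) (hν : ν ∈ Icc 0 (1 - μ)⁻¹) : LL F μ ν ≤ KL F G := by
  have hνμ : ν * (1 - μ) ≤ 1 := by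
    rw [← le_div_iff₀ (sub_pos.2 hμ), one_div]
    exact hν.2
  rw [LL]
  split_ifs with hL
  swap
  · exact bot_le
  rw [KL]
  split_ifs with hK
  swap
  · exact le_top
  have hxμ : Integrable (fun x => x - μ) G := hGint.sub (integrable_const μ)
  have hint : Integrable (fun x => 1 - (x - μ) * ν) G := (integrable_const 1).sub (hxμ.mul_const ν)
  have hmean : ∫ x, (1 - (x - μ) * ν) ∂G ≤ 1 := by
    rw [integral_sub (integrable_const 1) (hxμ.mul_const ν),
      integral_mul_const, integral_sub hGint (integrable_const μ)]
    simp only [integral_const, probReal_univ, smul_eq_mul, one_mul]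
    nlinarith [hν.1]
  have hgibbs := integral_log_le_integral_llr hK.1 hK.2 (by fun_prop)
    (measure_eq_zero_iff_ae_notMem.1 hL.2 |>.mono fun x hx => by simpa using hx) hL.1
    ((ae_one_sub_mul_le (ae_le_one_of_measure_Ioi_eq_zero hG1) hν.1).mono fun x hx => by linarith)
    hint hmean
  rw [EReal.coe_ennreal_ofReal]
  exact EReal.coe_le_coe_iff.2 (le_max_of_le_left hgibbs)

lemma continuousOn_integral_div_one_sub_mul [IsFiniteMeasure F] (hF1 : ∀ᵐ x ∂F, x ≤ 1)
    (hμ : μ < 1) (c : ℝ) {b : ℝ} (hb : b * (1 - μ) < 1) :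
    ContinuousOn (fun ν => ∫ x, c / (1 - (x - μ) * ν) ∂F) (Icc 0 b) := by
  have hδ : 0 < 1 - b * (1 - μ) := sub_pos.2 hb
  have hbound : ∀ ν ∈ Icc 0 b, ∀ᵐ x ∂F, 1 - b * (1 - μ) ≤ 1 - (x - μ) * ν := fun ν hν =>
    (ae_one_sub_mul_le hF1 hν.1).mono fun x hx => by nlinarith [hν.2]
  refine continuousOn_of_dominated (bound := fun _ => |c| / (1 - b * (1 - μ)))
    (fun ν _ => Measurable.aestronglyMeasurable (by fun_prop)) (fun ν hν => ?_)
    (integrable_const _) ?_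
  · filter_upwards [hbound ν hν] with x hx
    rw [norm_div, Real.norm_eq_abs, Real.norm_eq_abs, abs_of_pos (hδ.trans_le hx)]
    exact div_le_div_of_nonneg_left (abs_nonneg c) hδ hx
  · filter_upwards [hF1] with x hx
    refine continuousOn_const.div (by fun_prop) fun ν hν => ?_
    nlinarith [hν.1, hν.2]

lemma integrable_div_one_sub_mul_mul (hF1 : ∀ᵐ x ∂F, x ≤ 1) (hν : 0 ≤ ν)
    (hνμ : ν * (1 - μ) < 1) {c : ℝ} (hc : 0 ≤ c) {g : ℝ → ℝ} (hg : Integrable g F) :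
    Integrable (fun x => c / (1 - (x - μ) * ν) * g x) F := by
  have hδ : 0 < 1 - ν * (1 - μ) := sub_pos.2 hνμ
  refine hg.bdd_mul (c := c / (1 - ν * (1 - μ))) (Measurable.aestronglyMeasurable (by fun_prop)) ?_
  filter_upwards [ae_one_sub_mul_le hF1 hν] with x hx
  rw [Real.norm_eq_abs, abs_of_nonneg (div_nonneg hc (hδ.le.trans hx))]
  exact div_le_div_of_nonneg_left hc hδ hx

lemma integral_div_one_sub_mul_mul_id [IsProbabilityMeasure F] (hF1 : ∀ᵐ x ∂F, x ≤ 1)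
    (hν : 0 < ν) (hνμ : ν * (1 - μ) < 1) {c : ℝ} (hc : 0 ≤ c) :
    ∫ x, c / (1 - (x - μ) * ν) * x ∂F
      = μ * ∫ x, c / (1 - (x - μ) * ν) ∂F + (∫ x, c / (1 - (x - μ) * ν) ∂F - c) / ν := by
  have hw : Integrable (fun x => c / (1 - (x - μ) * ν)) F := by
    simpa using integrable_div_one_sub_mul_mul hF1 hν.le hνμ hc (integrable_const 1)
  have hwc : Integrable (fun x => c / (1 - (x - μ) * ν) - c) F := hw.sub (integrable_const c)
  rw [integral_congr_ae
      (g := fun x => μ * (c / (1 - (x - μ) * ν)) + (c / (1 - (x - μ) * ν) - c) / ν),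
    integral_add (hw.const_mul μ) (hwc.div_const ν), integral_const_mul, integral_div,
    integral_sub hw (integrable_const c), integral_const]
  · simp
  filter_upwards [ae_one_sub_mul_le hF1 hν.le] with x hx
  have : 1 - (x - μ) * ν ≠ 0 := ((sub_pos.2 hνμ).trans_le hx).ne'
  field_simp
  ring

lemma DinfSemi_le_ofReal_integral_log_sub_log [IsProbabilityMeasure F] (hF : F (Ioi 1) = 0)
    (hFint : Integrable (fun x => x) F) {c : ℝ} (hν : 0 < ν) (hνμ : ν * (1 - μ) < 1)
    (hc : 0 < c) (hW : ∫ x, c / (1 - (x - μ) * ν) ∂F ≤ 1)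
    (hmean : 0 < (∫ x, c / (1 - (x - μ) * ν) ∂F - c) / ν
      + (1 - ∫ x, c / (1 - (x - μ) * ν) ∂F) * (1 - μ)) :
    DinfSemi F μ ≤ ENNReal.ofReal (∫ x, Real.log (1 - (x - μ) * ν) ∂F - Real.log c) := by
  have hF1 := ae_le_one_of_measure_Ioi_eq_zero hF
  have hh := ae_one_sub_mul_le (μ := μ) hF1 hν.le
  have hpos : ∀ᵐ x ∂F, 0 < 1 - (x - μ) * ν := hh.mono fun x hx => (sub_pos.2 hνμ).trans_le hx
  have hw_meas : Measurable fun x => c / (1 - (x - μ) * ν) := by fun_prop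
  have hw_pos : ∀ᵐ x ∂F, 0 < c / (1 - (x - μ) * ν) := hpos.mono fun x hx => div_pos hc hx
  have hw_nonneg : 0 ≤ᵐ[F] fun x => c / (1 - (x - μ) * ν) := hw_pos.mono fun x hx => hx.le
  have hw_int : Integrable (fun x => c / (1 - (x - μ) * ν)) F := by
    simpa using integrable_div_one_sub_mul_mul hF1 hν.le hνμ hc.le (integrable_const 1)
  have hxw := integrable_div_one_sub_mul_mul hF1 hν.le hνμ hc.le hFint
  have hlog_int := integrable_log_one_sub_mul hF1 hFint hν.le hνμ
  have hlogw : ∀ᵐ x ∂F,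
      Real.log (c / (1 - (x - μ) * ν)) = Real.log c - Real.log (1 - (x - μ) * ν) :=
    hpos.mono fun x hx => Real.log_div hc.ne' hx.ne'
  have hlogw_int : Integrable (fun x => Real.log (c / (1 - (x - μ) * ν))) F :=
    ((integrable_const _).sub hlog_int).congr (hlogw.mono fun x hx => hx.symm)
  set G := withDensityAddDiracOne F fun x => c / (1 - (x - μ) * ν)
  have := isProbabilityMeasure_withDensityAddDiracOne hw_nonneg hw_int hW
  have hGmean : μ < ∫ x, x ∂G := by
    rw [integral_id_withDensityAddDiracOne hw_meas hw_nonneg hxw hW,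
      integral_div_one_sub_mul_mul_id hF1 hν hνμ hc.le]
    linarith
  calc DinfSemi F μ ≤ KL F G :=
        iInf₂_le G ⟨inferInstance, withDensityAddDiracOne_Ioi_one hF,
          integrable_id_withDensityAddDiracOne hw_meas hw_nonneg hxw, hGmean⟩
    _ ≤ ENNReal.ofReal (-∫ x, Real.log (c / (1 - (x - μ) * ν)) ∂F) :=
        KL_le_of_withDensity_le hw_meas hw_pos hlogw_int withDensity_le_withDensityAddDiracOne
    _ = ENNReal.ofReal (∫ x, Real.log (1 - (x - μ) * ν) ∂F - Real.log c) := by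
        rw [integral_congr_ae hlogw, integral_sub (integrable_const _) hlog_int, integral_const]
        simp only [probReal_univ, smul_eq_mul, one_mul, neg_sub]

lemma DinfSemi_le_toENNReal_Dtilde_add [IsProbabilityMeasure F] (hF : F (Ioi 1) = 0)
    (hFint : Integrable (fun x => x) F) (hμ : μ < 1) {c : ℝ} (hc0 : 0 < c) (hc1 : c < 1) :
    DinfSemi F μ ≤ (Dtilde F μ).toENNReal + ENNReal.ofReal (-Real.log c) := by
  have hF1 := ae_le_one_of_measure_Ioi_eq_zero hF
  have hβ : 0 < 1 - μ := sub_pos.2 hμ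
  set b := (1 + c) / 2 / (1 - μ)
  have hb : 0 < b := by positivity
  have hbβ : b * (1 - μ) = (1 + c) / 2 := div_mul_cancel₀ _ hβ.ne'
  obtain ⟨ν, hν, hW, hmean⟩ := exists_mem_Ioc_le_one_and_pos (β := 1 - μ)
    (continuousOn_integral_div_one_sub_mul hF1 hμ c (by linarith)) (by simp)
    (integral_nonneg_of_ae ((ae_one_sub_mul_le hF1 hb.le).mono fun x hx =>
      div_nonneg hc0.le (by linarith))) hc1 (by linarith) (by linarith) hb
  have hνμ : ν * (1 - μ) < 1 := by nlinarith [hν.2]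
  have hLL : ENNReal.ofReal (∫ x, Real.log (1 - (x - μ) * ν) ∂F) ≤ (Dtilde F μ).toENNReal := by
    rw [← EReal.real_coe_toENNReal, ← LL_eq_integral hF1 hFint hν.1.le hνμ]
    refine EReal.toENNReal_le_toENNReal (le_iSup₂ (f := fun ν _ => LL F μ ν) ν ⟨hν.1.le, ?_⟩)
    rw [← one_div, le_div_iff₀ hβ]
    exact hνμ.le
  calc DinfSemi F μ
      ≤ ENNReal.ofReal (∫ x, Real.log (1 - (x - μ) * ν) ∂F - Real.log c) :=
        DinfSemi_le_ofReal_integral_log_sub_log hF hFint hν.1 hνμ hc0 hW hmean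
    _ ≤ ENNReal.ofReal (∫ x, Real.log (1 - (x - μ) * ν) ∂F) + ENNReal.ofReal (-Real.log c) := by
        rw [sub_eq_add_neg]
        exact ENNReal.ofReal_add_le
    _ ≤ (Dtilde F μ).toENNReal + ENNReal.ofReal (-Real.log c) := by gcongr

end Tilting

/-- For a probability measure `F` supported in `(-∞,1]` with finite
moment generating function near `0` and `μ < 1`, `D_inf(F,μ;𝒜) = D̃_inf(F,μ)`. -/
theorem stmt1 (F : Measure ℝ) [IsProbabilityMeasure F] (hF : F (Set.Ioi 1) = 0)
    (hmgf : MGFNearZero F) (μ : ℝ) (hμ : μ < 1) :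
    (DinfSemi F μ : EReal) = Dtilde F μ := by
  have hFint := hmgf.integrable_id
  have hD : 0 ≤ Dtilde F μ :=
    LL_zero (F := F) (μ := μ) ▸ le_iSup₂ (f := fun ν _ => LL F μ ν) 0
      ⟨le_rfl, (inv_pos.2 (sub_pos.2 hμ)).le⟩
  rw [← EReal.coe_toENNReal hD, EReal.coe_ennreal_eq_coe_ennreal_iff]
  refine le_antisymm (ENNReal.le_of_forall_pos_le_add fun ε hε _ => ?_)
    (le_iInf₂ fun G ⟨hG, hG1, hGint, hGmean⟩ => ?_)
  · simpa [Real.log_exp] using DinfSemi_le_toENNReal_Dtilde_add hF hFint hμ (Real.exp_pos (-ε))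
      (Real.exp_lt_one_iff.2 (by simpa using hε))
  · have := hG
    refine (EReal.toENNReal_le_toENNReal ?_).trans_eq EReal.toENNReal_coe
    exact iSup₂_le fun ν hν => LL_le_KL hG1 hGint hGmean hμ hν
end

section
/- Let F be a probability measure supported in (-∞,1] with finite moment generating function near 0. Then for every μ with E(F) < μ < 1, the map μ' ↦ D̃_inf(F,μ') is differentiable at μ, its derivative equals ν*(F,μ), the unique maximizer of L(·;F,μ) over [0,1/(1−μ)], and in particular this derivative is at most 1/(1−μ). -/
open MeasureTheory ProbabilityTheory Set Filter
open scoped ENNReal NNReal Classical BoundedContinuousFunction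

/-!
Substituting `ν = s / (1 - μ)` turns `D̃_inf(F, μ)` into `sup_{s ∈ [0, 1]} K(μ, s)` with
`K(μ, s) = ∫ log (1 - μ + s (μ - x)) dF(x) - log (1 - μ)`: a supremum over a domain independent of
`μ` of a family that is differentiable in `μ` (dominated convergence) and strictly concave in `s`
(as `F ≠ δ_μ`). Danskin's envelope theorem gives the derivative `∂_μ K(μ, s*)` at the unique
maximizer `s*`, and the first-order condition `∂_s K(μ, s*) = 0` (or `s* = 1`) turns it into
`s* / (1 - μ) = ν*`; `E(F) < μ` makes `K(μ, s) > 0 = K(μ, 0)` for small `s > 0`.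
The integrand may fail to be integrable at `s = 1`. If `L(1/(1-μ)) = -∞`, monotone convergence
gives `σ < 1` with `K ≤ 0` on `[σ, 1)` uniformly for `μ` near the given point, and the supremum may
be taken over `[0, σ]`, where the integrands are dominated.
-/

open Real Topology

section Envelope

variable {α : Type*} [PseudoMetricSpace α] {K h : ℝ → α → ℝ} {U : Set ℝ} {A : Set α} {μ : ℝ}
  {s₀ : α}

theorem eventually_dist_lt_of_isMaxOn (hA : IsCompact A) (hU : U ∈ 𝓝 μ)
    (hK : ContinuousOn ↿K (U ×ˢ A)) (hs₀A : s₀ ∈ A) (hs₀ : ∀ s ∈ A, s ≠ s₀ → K μ s < K μ s₀)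
    {ε : ℝ} (hε : 0 < ε) :
    ∀ᶠ μ' in 𝓝 μ, ∀ s ∈ A, IsMaxOn (K μ') A s → dist s s₀ < ε := by
  set B := A ∩ {s | ε ≤ dist s s₀}
  rcases B.eq_empty_or_nonempty with hB | hB
  · exact Eventually.of_forall fun μ' s hs _ =>
      not_le.1 fun hεs => (Set.eq_empty_iff_forall_notMem.1 hB) s ⟨hs, hεs⟩
  have hμU : μ ∈ U := mem_of_mem_nhds hU
  have hBc : IsCompact B :=
    hA.inter_right (isClosed_le continuous_const (continuous_id.dist continuous_const))
  obtain ⟨sb, ⟨hsbA, hsbε : ε ≤ dist sb s₀⟩, hsbmax⟩ := hBc.exists_isMaxOn hB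
    ((hK.uncurry_left μ hμU).mono inter_subset_left)
  have hgap : 0 < K μ s₀ - K μ sb := sub_pos.2 <| hs₀ sb hsbA fun h => by
    rw [h, dist_self] at hsbε; linarith
  obtain ⟨v, hv, hclose⟩ := hA.mem_uniformity_of_prod hK hμU
    (Metric.dist_mem_uniformity (half_pos hgap))
  rw [nhdsWithin_eq_nhds.2 hU] at hv
  filter_upwards [hv] with μ' hμ' s hsA hsmax
  by_contra! hεs
  have e1 : dist (K μ' s) (K μ s) < _ := hclose μ' hμ' s hsA
  have e2 : dist (K μ' s₀) (K μ s₀) < _ := hclose μ' hμ' s₀ hs₀A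
  have e3 : K μ s ≤ K μ sb := hsbmax ⟨hsA, hεs⟩
  have e4 : K μ' s₀ ≤ K μ' s := hsmax hs₀A
  rw [Real.dist_eq, abs_lt] at e1 e2
  linarith [e1.1, e2.2]

theorem exists_forall_abs_sub_sub_mul_le (hU : U ∈ 𝓝 μ)
    (hKd : ∀ s ∈ A, ∀ μ' ∈ U, HasDerivAt (K · s) (h μ' s) μ')
    (hh : ContinuousWithinAt ↿h (U ×ˢ A) (μ, s₀)) {ε : ℝ} (hε : 0 < ε) :
    ∃ ρ > 0, ∀ s ∈ A, dist s s₀ < ρ → ∀ μ' ∈ Metric.ball μ ρ,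
      |K μ' s - K μ s - h μ s₀ * (μ' - μ)| ≤ ε * |μ' - μ| := by
  obtain ⟨ρ₁, hρ₁, hhρ₁⟩ := Metric.continuousWithinAt_iff.1 hh ε hε
  obtain ⟨ρ₂, hρ₂, hballU⟩ := Metric.mem_nhds_iff.1 hU
  refine ⟨min ρ₁ ρ₂, lt_min hρ₁ hρ₂, fun s hs hds μ' hμ' => ?_⟩
  have hU' : Metric.ball μ (min ρ₁ ρ₂) ⊆ U :=
    (Metric.ball_subset_ball (min_le_right _ _)).trans hballU
  have hbound := (convex_ball μ (min ρ₁ ρ₂)).norm_image_sub_le_of_norm_hasDerivWithin_le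
    (f := fun t => K t s - h μ s₀ * t) (f' := fun t => h t s - h μ s₀)
    (fun t ht => ((hKd s hs t (hU' ht)).sub
      ((hasDerivAt_id t).const_mul (h μ s₀) |>.congr_deriv (mul_one _))).hasDerivWithinAt)
    (fun t ht => by
      refine (hhρ₁ (mk_mem_prod (hU' ht) hs) ?_).le
      rw [Prod.dist_eq, max_lt_iff]
      exact ⟨(Metric.mem_ball.1 ht).trans_le (min_le_left _ _), hds.trans_le (min_le_left _ _)⟩)
    (Metric.mem_ball_self (lt_min hρ₁ hρ₂)) hμ'
  simp only [Real.norm_eq_abs] at hbound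
  convert hbound using 2
  ring

/-- Danskin's envelope theorem for a strict maximizer. -/
theorem hasDerivAt_sSup_image_of_strictMax (hA : IsCompact A) (hU : U ∈ 𝓝 μ)
    (hK : ContinuousOn ↿K (U ×ˢ A))
    (hKd : ∀ s ∈ A, ∀ μ' ∈ U, HasDerivAt (K · s) (h μ' s) μ')
    (hh : ContinuousWithinAt ↿h (U ×ˢ A) (μ, s₀)) (hs₀A : s₀ ∈ A)
    (hs₀ : ∀ s ∈ A, s ≠ s₀ → K μ s < K μ s₀) :
    HasDerivAt (fun μ' => sSup (K μ' '' A)) (h μ s₀) μ := by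
  have hsup : sSup (K μ '' A) = K μ s₀ := IsGreatest.csSup_eq ⟨mem_image_of_mem _ hs₀A,
    forall_mem_image.2 fun s hs => (eq_or_ne s s₀).elim (fun h => h ▸ le_rfl)
      fun h => (hs₀ s hs h).le⟩
  rw [hasDerivAt_iff_isLittleO, Asymptotics.isLittleO_iff]
  intro ε hε
  obtain ⟨ρ, hρ, hest⟩ := exists_forall_abs_sub_sub_mul_le hU hKd hh hε
  filter_upwards [eventually_dist_lt_of_isMaxOn hA hU hK hs₀A hs₀ hρ, hU,
    Metric.ball_mem_nhds μ hρ] with μ' hnear hμ'U hμ'ρ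
  obtain ⟨s', hs'A, hsup', hmax'⟩ := hA.exists_sSup_image_eq_and_ge ⟨s₀, hs₀A⟩
    (hK.uncurry_left μ' hμ'U)
  have hlow := abs_le.1 (hest s₀ hs₀A (by rwa [dist_self]) μ' hμ'ρ)
  have hup := abs_le.1 (hest s' hs'A (hnear s' hs'A (isMaxOn_iff.2 hmax')) μ' hμ'ρ)
  have e1 : K μ' s₀ ≤ K μ' s' := hmax' s₀ hs₀A
  have e2 : K μ s' ≤ K μ s₀ := (eq_or_ne s' s₀).elim (fun h => h ▸ le_rfl)
    fun h => (hs₀ s' hs'A h).le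
  rw [hsup', hsup, Real.norm_eq_abs, Real.norm_eq_abs, smul_eq_mul, abs_le]
  constructor <;> linarith [hlow.1, hlow.2, hup.1, hup.2]

end Envelope

lemma Real.abs_log_le_abs_log_add {c t : ℝ} (hc : 0 < c) (hct : c ≤ t) :
    |log t| ≤ |log c| + t := by
  have ht : 0 < t := hc.trans_le hct
  have hup : log t ≤ t := (log_le_sub_one_of_pos ht).trans (by linarith)
  have hlow : log c ≤ log t := log_le_log hc hct
  rw [abs_le]
  constructor <;> linarith [neg_abs_le (log c), abs_nonneg (log c)]

lemma Real.sub_two_mul_sq_le_log_one_add {t : ℝ} (ht : -(1 / 2) ≤ t) :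
    t - 2 * t ^ 2 ≤ log (1 + t) := by
  have h1t : 0 < 1 + t := by linarith
  have hinv := one_sub_inv_le_log_of_pos h1t
  have : t - 2 * t ^ 2 ≤ 1 - (1 + t)⁻¹ := by
    rw [show 1 - (1 + t)⁻¹ = t / (1 + t) by field_simp; ring, le_div_iff₀ h1t]
    nlinarith [sq_nonneg t]
  linarith

lemma MGFNearZero.integrable_pow {F : Measure ℝ} (h : MGFNearZero F) (n : ℕ) :
    Integrable (fun x => x ^ n) F := by
  obtain ⟨ε, hε, hexp⟩ := h
  have hε2 : |ε / 2| < ε := by rw [abs_of_pos (half_pos hε)]; linarith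
  exact integrable_pow_of_integrable_exp_mul (X := id) (half_pos hε).ne' (hexp _ hε2)
    (hexp _ (by rwa [abs_neg])) n

lemma ae_le_of_measure_Ioi_eq_zero {F : Measure ℝ} {c : ℝ} (h : F (Ioi c) = 0) :
    ∀ᵐ x ∂F, x ≤ c :=
  (measure_eq_zero_iff_ae_notMem.1 h).mono fun _ hx => not_lt.1 hx

namespace Dtilde

/-- With `ν = s / (1 - μ)` one has `1 - (x - μ) ν = arg μ s x / (1 - μ)`: in the variable `s` the
domain `[0, 1/(1-μ)]` of the supremum defining `Dtilde F μ` becomes `[0, 1]` for every `μ`. -/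
def arg (μ s x : ℝ) : ℝ := 1 - μ + s * (μ - x)

/-- `L(s / (1 - μ); F, μ)`, when the integral is finite. -/
noncomputable def scaledL (F : Measure ℝ) (μ s : ℝ) : ℝ :=
  ∫ x, log (arg μ s x) ∂F - log (1 - μ)

/-- The derivative of `scaledL F μ s` in `μ`. -/
noncomputable def scaledLDeriv (F : Measure ℝ) (μ s : ℝ) : ℝ :=
  ∫ x, (s - 1) / arg μ s x ∂F + (1 - μ)⁻¹

variable {F : Measure ℝ} {a b c σ μ s s₀ x : ℝ}

lemma one_sub_mul_eq_arg_div (hμ : μ ≠ 1) :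
    1 - (x - μ) * (s * (1 - μ)⁻¹) = arg μ s x / (1 - μ) := by
  have : 1 - μ ≠ 0 := sub_ne_zero.2 hμ.symm
  field_simp
  rw [arg]
  ring

lemma arg_eq : arg μ s x = (1 - s) * (1 - μ) + s * (1 - x) := by
  rw [arg]; ring

@[simp] lemma arg_zero : arg μ 0 x = 1 - μ := by simp [arg]

@[simp] lemma arg_one : arg μ 1 x = 1 - x := by simp [arg]

lemma le_arg (hx : x ≤ 1) (hs : 0 ≤ s) : (1 - s) * (1 - μ) ≤ arg μ s x := by
  rw [arg_eq]; nlinarith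

lemma arg_pos (hx : x ≤ 1) (hμ : μ < 1) (hs : s ∈ Ico 0 1) : 0 < arg μ s x :=
  (mul_pos (sub_pos.2 hs.2) (sub_pos.2 hμ)).trans_le (le_arg hx hs.1)

lemma arg_le_add (hx : x ≤ 1) (hμ : μ ≤ 1) (hs : s ∈ Icc 0 1) :
    arg μ s x ≤ (1 - μ) + (1 - x) := by
  rw [arg_eq]; nlinarith [hs.1, hs.2]

lemma measurable_arg : Measurable (arg μ s) := by
  unfold arg; fun_prop

lemma integrable_log_arg [IsProbabilityMeasure F] (hsupp : F (Ioi 1) = 0)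
    (hF1 : Integrable (fun x => x) F) (hμ : μ < 1) (hs : s ∈ Ico 0 1) :
    Integrable (fun x => log (arg μ s x)) F := by
  have hc : 0 < (1 - s) * (1 - μ) := mul_pos (sub_pos.2 hs.2) (sub_pos.2 hμ)
  refine ((integrable_const (|log ((1 - s) * (1 - μ))| + (1 - μ) + 1)).sub hF1).mono'
    measurable_arg.log.aestronglyMeasurable ?_
  filter_upwards [ae_le_of_measure_Ioi_eq_zero hsupp] with x hx
  have := abs_log_le_abs_log_add hc (le_arg hx hs.1)
  have := arg_le_add hx hμ.le (Ico_subset_Icc_self hs)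
  rw [Real.norm_eq_abs, Pi.sub_apply]
  linarith

lemma LL_mul_inv_eq [IsProbabilityMeasure F] (hμ : μ < 1) (s : ℝ) :
    LL F μ (s * (1 - μ)⁻¹) =
      if Integrable (fun x => log (arg μ s x)) F ∧ F {x | arg μ s x ≤ 0} = 0
      then ((scaledL F μ s : ℝ) : EReal) else ⊥ := by
  have h1μ : 0 < 1 - μ := sub_pos.2 hμ
  have hset : {x | 1 - (x - μ) * (s * (1 - μ)⁻¹) ≤ 0} = {x | arg μ s x ≤ 0} := by
    ext x
    simp only [mem_ofPred_eq, one_sub_mul_eq_arg_div hμ.ne, div_nonpos_iff, not_le.2 h1μ,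
      and_false, h1μ.le, and_true, false_or]
  rw [LL, hset]
  by_cases hnull : F {x | arg μ s x ≤ 0} = 0
  · have hcongr : (fun x => log (1 - (x - μ) * (s * (1 - μ)⁻¹)))
        =ᵐ[F] fun x => log (arg μ s x) + -log (1 - μ) := by
      filter_upwards [measure_eq_zero_iff_ae_notMem.1 hnull] with x hx
      rw [one_sub_mul_eq_arg_div hμ.ne, log_div (not_le.1 hx).ne' h1μ.ne', sub_eq_add_neg]
    simp only [hnull, and_true, integrable_congr hcongr, integrable_add_const_iff]
    split_ifs
    · rw [integral_congr_ae hcongr, integral_add ‹_› (integrable_const _)]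
      simp [scaledL, sub_eq_add_neg]
    · rfl
  · simp [hnull]

lemma LL_mul_inv_eq_scaledL [IsProbabilityMeasure F] (hμ : μ < 1)
    (hint : Integrable (fun x => log (arg μ s x)) F) (hpos : ∀ᵐ x ∂F, 0 < arg μ s x) :
    LL F μ (s * (1 - μ)⁻¹) = scaledL F μ s := by
  rw [LL_mul_inv_eq hμ, if_pos ⟨hint, measure_eq_zero_iff_ae_notMem.2 <|
    hpos.mono fun _ hx => not_le.2 hx⟩]

lemma image_mul_inv_Icc (hμ : μ < 1) :
    (· * (1 - μ)⁻¹) '' Icc (0 : ℝ) 1 = Icc 0 (1 - μ)⁻¹ := by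
  rw [image_mul_right_Icc zero_le_one (inv_nonneg.2 (sub_pos.2 hμ).le), zero_mul, one_mul]

lemma Dtilde_eq_iSup (hμ : μ < 1) :
    Dtilde F μ = ⨆ s ∈ Icc (0 : ℝ) 1, LL F μ (s * (1 - μ)⁻¹) := by
  rw [Dtilde, ← image_mul_inv_Icc hμ, iSup_image]

lemma hasDerivAt_arg_fst : HasDerivAt (fun t => arg t s x) (s - 1) μ :=
  (((hasDerivAt_id μ).const_sub 1).add
    (((hasDerivAt_id μ).sub_const x).const_mul s)).congr_deriv (by ring)

lemma hasDerivAt_arg_snd : HasDerivAt (fun t => arg μ t x) (μ - x) s := by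
  simpa [arg] using ((hasDerivAt_id s).mul_const (μ - x)).const_add (1 - μ)

lemma abs_div_arg_le (hx : x ≤ 1) (hμ : μ < 1) (hs : s ∈ Icc 0 1) :
    |(s - 1) / arg μ s x| ≤ (1 - μ)⁻¹ := by
  rcases hs.2.eq_or_lt with rfl | hs1
  · simp [(sub_pos.2 hμ).le]
  have hpos := arg_pos hx hμ ⟨hs.1, hs1⟩
  rw [abs_div, abs_of_nonpos (by linarith), abs_of_pos hpos, div_le_iff₀ hpos,
    inv_mul_eq_div, le_div_iff₀ (sub_pos.2 hμ)]
  linarith [le_arg (μ := μ) hx hs.1]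

@[simp] lemma scaledL_zero [IsProbabilityMeasure F] : scaledL F μ 0 = 0 := by
  simp [scaledL]

@[simp] lemma scaledLDeriv_one : scaledLDeriv F μ 1 = (1 - μ)⁻¹ := by
  simp [scaledLDeriv]

lemma abs_sub_div_arg_le (hx : x ≤ 1) (hμ : μ < 1) (hs : s ∈ Ico 0 1) :
    |(μ - x) / arg μ s x| ≤ (|μ| + |x|) / ((1 - s) * (1 - μ)) := by
  have hpos := arg_pos hx hμ hs
  rw [abs_div, abs_of_pos hpos]
  exact div_le_div₀ (by positivity) (abs_sub _ _) (mul_pos (sub_pos.2 hs.2) (sub_pos.2 hμ))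
    (le_arg hx hs.1)

lemma exists_scaledL_pos [IsProbabilityMeasure F] (hsupp : F (Ioi 1) = 0)
    (hF1 : Integrable (fun x => x) F) (hF2 : Integrable (fun x => x ^ 2) F) (hμ : μ < 1)
    (hEF : ∫ x, x ∂F < μ) (hσ : 0 < σ) : ∃ s ∈ Icc 0 σ, 0 < scaledL F μ s := by
  have h1μ : 0 < 1 - μ := sub_pos.2 hμ
  set y : ℝ → ℝ := fun x => (μ - x) / (1 - μ)
  have hy : Integrable y F := ((integrable_const μ).sub hF1).div_const _
  have hy2 : Integrable (fun x => y x ^ 2) F := by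
    refine ((((integrable_const (μ ^ 2)).sub (hF1.const_mul (2 * μ))).add hF2).div_const
      ((1 - μ) ^ 2)).congr (Eventually.of_forall fun x => ?_)
    simp only [y, Pi.add_apply, Pi.sub_apply]
    field_simp
    ring
  set m := ∫ x, y x ∂F
  set Y := ∫ x, y x ^ 2 ∂F
  have hm : 0 < m := by
    simp only [m, y, integral_div, integral_sub (integrable_const μ) hF1, integral_const,
      probReal_univ, one_smul]
    exact div_pos (by linarith) h1μ
  have hY : 0 ≤ Y := integral_nonneg fun x => sq_nonneg _
  set s := min σ (min (1 / 2) (m / (2 * Y + 1)))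
  have hs0 : 0 < s := lt_min hσ (lt_min one_half_pos (by positivity))
  have hs_half : s ≤ 1 / 2 := (min_le_right _ _).trans (min_le_left _ _)
  have hsY : s * (2 * Y + 1) ≤ m :=
    (le_div_iff₀ (by positivity)).1 ((min_le_right _ _).trans (min_le_right _ _))
  refine ⟨s, ⟨hs0.le, min_le_left _ _⟩, ?_⟩
  -- `log (1 + t) ≥ t - 2 t²` at `t = s y(x) ≥ -1/2`, integrated against `F`
  have hpt : ∀ᵐ x ∂F, s * y x - 2 * s ^ 2 * y x ^ 2 ≤ log (arg μ s x) - log (1 - μ) := by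
    filter_upwards [ae_le_of_measure_Ioi_eq_zero hsupp] with x hx
    have hy1 : -1 ≤ y x := by rw [le_div_iff₀ h1μ]; linarith
    have harg : arg μ s x = (1 - μ) * (1 + s * y x) := by
      simp only [arg, y]; field_simp
    have h1sy : 0 < 1 + s * y x := by nlinarith
    rw [harg, log_mul h1μ.ne' h1sy.ne', add_sub_cancel_left]
    have := sub_two_mul_sq_le_log_one_add (t := s * y x) (by nlinarith)
    linarith
  have hint := integrable_log_arg hsupp hF1 hμ ⟨hs0.le, by linarith⟩
  have hle := integral_mono_ae ((hy.const_mul s).sub (hy2.const_mul (2 * s ^ 2)))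
    (hint.sub (integrable_const _)) hpt
  simp only [Pi.sub_apply] at hle
  rw [integral_sub (hy.const_mul s) (hy2.const_mul _), integral_const_mul, integral_const_mul,
    integral_sub hint (integrable_const _), integral_const, probReal_univ, one_smul] at hle
  have : 0 < s * m - 2 * s ^ 2 * Y := by nlinarith
  exact this.trans_le hle

lemma hasDerivAt_scaledL_snd [IsProbabilityMeasure F] (hsupp : F (Ioi 1) = 0)
    (hF1 : Integrable (fun x => x) F) (hμ : μ < 1) (hs : s ∈ Ioo 0 1) :
    HasDerivAt (scaledL F μ) (∫ x, (μ - x) / arg μ s x ∂F) s := by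
  obtain ⟨s₁, hs₁⟩ := exists_between hs.2
  have key := hasDerivAt_integral_of_dominated_loc_of_deriv_le (μ := F) (x₀ := s)
    (F := fun t x => log (arg μ t x)) (F' := fun t x => (μ - x) / arg μ t x)
    (bound := fun x => (|μ| + |x|) / ((1 - s₁) * (1 - μ))) (Ioo_mem_nhds hs.1 hs₁.1)
    (Eventually.of_forall fun t => measurable_arg.log.aestronglyMeasurable)
    (integrable_log_arg hsupp hF1 hμ ⟨hs.1.le, hs.2⟩)
    ((measurable_const.sub measurable_id).div measurable_arg).aestronglyMeasurable ?_
    (((integrable_const _).add hF1.abs).div_const _) ?_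
  · exact key.2.sub_const _
  · filter_upwards [ae_le_of_measure_Ioi_eq_zero hsupp] with x hx t ht
    refine (abs_sub_div_arg_le hx hμ ⟨ht.1.le, ht.2.trans hs₁.2⟩).trans ?_
    gcongr
    · nlinarith [sub_pos.2 hs₁.2, sub_pos.2 hμ]
    · linarith [ht.2]
  · filter_upwards [ae_le_of_measure_Ioi_eq_zero hsupp] with x hx t ht
    exact hasDerivAt_arg_snd.log (arg_pos hx hμ ⟨ht.1.le, ht.2.trans hs₁.2⟩).ne'

/-- Since `arg μ s x - (1 - μ) = s (μ - x)`, the `μ`-derivative differs from `s / (1 - μ)` by a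
multiple of the `s`-derivative. -/
lemma scaledLDeriv_eq [IsProbabilityMeasure F] (hsupp : F (Ioi 1) = 0)
    (hF1 : Integrable (fun x => x) F) (hμ : μ < 1) (hs : s ∈ Ico 0 1) :
    scaledLDeriv F μ s =
      s * (1 - μ)⁻¹ + s * (1 - s) * (1 - μ)⁻¹ * ∫ x, (μ - x) / arg μ s x ∂F := by
  have hpt : (fun x => (s - 1) / arg μ s x) =ᵐ[F]
      fun x => s * (1 - s) * (1 - μ)⁻¹ * ((μ - x) / arg μ s x) + (s - 1) * (1 - μ)⁻¹ := by
    filter_upwards [ae_le_of_measure_Ioi_eq_zero hsupp] with x hx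
    have := (arg_pos hx hμ hs).ne'
    have : 1 - μ ≠ 0 := (sub_pos.2 hμ).ne'
    field_simp
    rw [arg]
    ring
  have hint : Integrable (fun x => (μ - x) / arg μ s x) F := by
    refine (((integrable_const |μ|).add hF1.abs).div_const ((1 - s) * (1 - μ))).mono'
      ((measurable_const.sub measurable_id).div measurable_arg).aestronglyMeasurable ?_
    filter_upwards [ae_le_of_measure_Ioi_eq_zero hsupp] with x hx using abs_sub_div_arg_le hx hμ hs
  rw [scaledLDeriv, integral_congr_ae hpt, integral_add (hint.const_mul _) (integrable_const _),
    integral_const_mul, integral_const, probReal_univ, one_smul]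
  ring

lemma scaledLDeriv_eq_of_isLocalMax [IsProbabilityMeasure F] (hsupp : F (Ioi 1) = 0)
    (hF1 : Integrable (fun x => x) F) (hμ : μ < 1) (hs : s ∈ Ioo 0 1)
    (hmax : IsLocalMax (scaledL F μ) s) : scaledLDeriv F μ s = s * (1 - μ)⁻¹ := by
  rw [scaledLDeriv_eq hsupp hF1 hμ ⟨hs.1.le, hs.2⟩,
    hmax.hasDerivAt_eq_zero (hasDerivAt_scaledL_snd hsupp hF1 hμ hs), mul_zero, add_zero]

/-- `σ ∈ (0, 1]` is an admissible cut-off for `F` over `(a, b)`: on the box `(a, b) × [0, σ]`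
the integrand `log ∘ arg` is a.e. defined and dominated, while past `σ` the values of `L` are
`≤ 0 = L(0)`, hence irrelevant for the supremum. -/
structure AdmissibleCutoff (F : Measure ℝ) (a b σ : ℝ) : Prop where
  b_lt_one : b < 1
  mem_Ioc : σ ∈ Ioc 0 1
  pos : ∀ᵐ x ∂F, ∀ μ ∈ Ioo a b, ∀ s ∈ Icc 0 σ, 0 < arg μ s x
  dominated : ∃ D : ℝ → ℝ, Integrable D F ∧
    ∀ᵐ x ∂F, ∀ μ ∈ Ioo a b, ∀ s ∈ Icc 0 σ, |log (arg μ s x)| ≤ D x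
  tail : ∀ μ ∈ Ioo a b, σ < 1 → ∀ s ∈ Icc σ 1, LL F μ (s * (1 - μ)⁻¹) ≤ 0

namespace AdmissibleCutoff

lemma lt_one (h : AdmissibleCutoff F a b σ) (hμ : μ ∈ Ioo a b) : μ < 1 := hμ.2.trans h.b_lt_one

lemma integrable_log_arg (h : AdmissibleCutoff F a b σ) (hμ : μ ∈ Ioo a b)
    (hs : s ∈ Icc 0 σ) : Integrable (fun x => log (arg μ s x)) F := by
  obtain ⟨D, hD, hbound⟩ := h.dominated
  exact hD.mono' measurable_arg.log.aestronglyMeasurable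
    (by filter_upwards [hbound] with x hx using hx μ hμ s hs)

lemma LL_eq_scaledL [IsProbabilityMeasure F] (h : AdmissibleCutoff F a b σ)
    (hμ : μ ∈ Ioo a b) (hs : s ∈ Icc 0 σ) :
    LL F μ (s * (1 - μ)⁻¹) = scaledL F μ s :=
  LL_mul_inv_eq_scaledL (h.lt_one hμ) (h.integrable_log_arg hμ hs)
    (h.pos.mono fun _ hx => hx μ hμ s hs)

lemma continuousOn_scaledL (h : AdmissibleCutoff F a b σ) :
    ContinuousOn ↿(scaledL F) (Ioo a b ×ˢ Icc 0 σ) := by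
  obtain ⟨D, hD, hbound⟩ := h.dominated
  have hint : ContinuousOn (fun p : ℝ × ℝ => ∫ x, log (arg p.1 p.2 x) ∂F)
      (Ioo a b ×ˢ Icc 0 σ) := by
    refine continuousOn_of_dominated (bound := D)
      (fun p _ => measurable_arg.log.aestronglyMeasurable) (fun p hp => ?_) hD ?_
    · filter_upwards [hbound] with x hx using hx p.1 hp.1 p.2 hp.2
    · filter_upwards [h.pos] with x hx
      exact ContinuousOn.log (by unfold arg; fun_prop) fun p hp => (hx p.1 hp.1 p.2 hp.2).ne'
  exact hint.sub <| (continuous_const.sub continuous_fst).continuousOn.log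
    fun p hp => (sub_pos.2 (h.lt_one hp.1)).ne'

lemma hasDerivAt_scaledL [IsProbabilityMeasure F] (h : AdmissibleCutoff F a b σ)
    (hsupp : F (Ioi 1) = 0) (hμ : μ ∈ Ioo a b) (hs : s ∈ Icc 0 σ) :
    HasDerivAt (scaledL F · s) (scaledLDeriv F μ s) μ := by
  have hs1 : s ∈ Icc (0 : ℝ) 1 := ⟨hs.1, hs.2.trans h.mem_Ioc.2⟩
  have key := hasDerivAt_integral_of_dominated_loc_of_deriv_le (μ := F) (x₀ := μ)
    (F := fun t x => log (arg t s x)) (F' := fun t x => (s - 1) / arg t s x)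
    (bound := fun _ => (1 - b)⁻¹) (Ioo_mem_nhds hμ.1 hμ.2)
    (Eventually.of_forall fun t => measurable_arg.log.aestronglyMeasurable)
    (h.integrable_log_arg hμ hs) (measurable_const.div measurable_arg).aestronglyMeasurable ?_
    (integrable_const _) ?_
  · have hlog : HasDerivAt (fun t => log (1 - t)) (-(1 - μ)⁻¹) μ := by
      simpa [div_eq_mul_inv] using
        ((hasDerivAt_id μ).const_sub 1).log (sub_pos.2 (h.lt_one hμ)).ne'
    exact (key.2.sub hlog).congr_deriv (by rw [scaledLDeriv, sub_neg_eq_add])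
  · filter_upwards [ae_le_of_measure_Ioi_eq_zero hsupp] with x hx t ht
    exact (abs_div_arg_le hx (h.lt_one ht) hs1).trans
      (inv_anti₀ (sub_pos.2 h.b_lt_one) (by linarith [ht.2]))
  · filter_upwards [h.pos] with x hx t ht
    exact hasDerivAt_arg_fst.log (hx t ht s hs).ne'

lemma continuousOn_scaledLDeriv [IsProbabilityMeasure F] (h : AdmissibleCutoff F a b σ)
    (hsupp : F (Ioi 1) = 0) :
    ContinuousOn ↿(scaledLDeriv F) (Ioo a b ×ˢ Icc 0 σ) := by
  have hint : ContinuousOn (fun p : ℝ × ℝ => ∫ x, (p.2 - 1) / arg p.1 p.2 x ∂F)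
      (Ioo a b ×ˢ Icc 0 σ) := by
    refine continuousOn_of_dominated (bound := fun _ => (1 - b)⁻¹)
      (fun p _ => (measurable_const.div measurable_arg).aestronglyMeasurable) (fun p hp => ?_)
      (integrable_const _) ?_
    · filter_upwards [ae_le_of_measure_Ioi_eq_zero hsupp] with x hx
      exact (abs_div_arg_le hx (h.lt_one hp.1) ⟨hp.2.1, hp.2.2.trans h.mem_Ioc.2⟩).trans
        (inv_anti₀ (sub_pos.2 h.b_lt_one) (by linarith [hp.1.2]))
    · filter_upwards [h.pos] with x hx
      exact ContinuousOn.div (by fun_prop) (by unfold arg; fun_prop)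
        fun p hp => (hx p.1 hp.1 p.2 hp.2).ne'
  exact hint.add <| (continuous_const.sub continuous_fst).continuousOn.inv₀
    fun p hp => (sub_pos.2 (h.lt_one hp.1)).ne'

lemma strictConcaveOn_scaledL [IsProbabilityMeasure F]
    (h : AdmissibleCutoff F a b σ) (hμ : μ ∈ Ioo a b) (hF : ¬ ∀ᵐ x ∂F, x = μ) :
    StrictConcaveOn ℝ (Icc 0 σ) (scaledL F μ) := by
  refine ⟨convex_Icc 0 σ, fun s₁ hs₁ s₂ hs₂ hne c d hc hd hcd => ?_⟩
  have hs : c • s₁ + d • s₂ ∈ Icc 0 σ := convex_Icc 0 σ hs₁ hs₂ hc.le hd.le hcd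
  simp only [smul_eq_mul] at hs ⊢
  have harg : ∀ x, arg μ (c * s₁ + d * s₂) x = c * arg μ s₁ x + d * arg μ s₂ x := fun x => by
    simp only [arg]; linear_combination (1 - μ) * hcd.symm
  have hI₁ := h.integrable_log_arg hμ hs₁
  have hI₂ := h.integrable_log_arg hμ hs₂
  have hI := h.integrable_log_arg hμ hs
  -- the concavity gap of `log` at the three arguments vanishes only where `x = μ`
  set g := fun x =>
    log (arg μ (c * s₁ + d * s₂) x) - (c * log (arg μ s₁ x) + d * log (arg μ s₂ x))
  have hgap : ∀ᵐ x ∂F, 0 ≤ g x ∧ (g x = 0 → x = μ) := by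
    filter_upwards [h.pos] with x hx
    have hq₁ : arg μ s₁ x ∈ Ioi 0 := hx μ hμ s₁ hs₁
    have hq₂ : arg μ s₂ x ∈ Ioi 0 := hx μ hμ s₂ hs₂
    refine ⟨?_, fun hg0 => by_contra fun hxμ => ?_⟩
    · have := strictConcaveOn_log_Ioi.concaveOn.2 hq₁ hq₂ hc.le hd.le hcd
      simp only [g, harg, smul_eq_mul] at this ⊢
      linarith
    · have hq : arg μ s₁ x ≠ arg μ s₂ x := fun heq => hne <| by
        simp only [arg] at heq
        exact mul_right_cancel₀ (sub_ne_zero.2 (Ne.symm hxμ)) (by linarith)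
      have := strictConcaveOn_log_Ioi.2 hq₁ hq₂ hq hc hd hcd
      simp only [g, harg, smul_eq_mul] at this hg0
      linarith
  have hI₁₂ : Integrable (fun x => c * log (arg μ s₁ x) + d * log (arg μ s₂ x)) F :=
    (hI₁.const_mul c).add (hI₂.const_mul d)
  have hg_pos : 0 < ∫ x, g x ∂F := by
    refine (integral_nonneg_of_ae (hgap.mono fun x hx => hx.1)).lt_of_ne fun hzero => hF ?_
    filter_upwards [hgap, (integral_eq_zero_iff_of_nonneg_ae (hgap.mono fun x hx => hx.1)
      (hI.sub hI₁₂)).1 hzero.symm] with x hx hx0 using hx.2 hx0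
  simp only [g] at hg_pos
  rw [integral_sub hI hI₁₂, integral_add (hI₁.const_mul c) (hI₂.const_mul d),
    integral_const_mul, integral_const_mul] at hg_pos
  simp only [scaledL]
  linear_combination hg_pos - log (1 - μ) * hcd

lemma exists_strictMax_scaledL [IsProbabilityMeasure F] (h : AdmissibleCutoff F a b σ)
    (hsupp : F (Ioi 1) = 0) (hF1 : Integrable (fun x => x) F)
    (hF2 : Integrable (fun x => x ^ 2) F) (hμ : μ ∈ Ioo a b) (hEF : ∫ x, x ∂F < μ) :
    ∃ s₀ ∈ Icc 0 σ, (∀ s ∈ Icc 0 σ, s ≠ s₀ → scaledL F μ s < scaledL F μ s₀) ∧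
      0 < scaledL F μ s₀ ∧ scaledLDeriv F μ s₀ = s₀ * (1 - μ)⁻¹ := by
  obtain ⟨s₀, hs₀, hmax⟩ := isCompact_Icc.exists_isMaxOn (nonempty_Icc.2 h.mem_Ioc.1.le)
    (h.continuousOn_scaledL.uncurry_left (f := scaledL F) μ hμ)
  have hF : ¬ ∀ᵐ x ∂F, x = μ := fun hae => hEF.ne <| by
    rw [integral_congr_ae hae, integral_const, probReal_univ, one_smul]
  have hstrict : ∀ s ∈ Icc 0 σ, s ≠ s₀ → scaledL F μ s < scaledL F μ s₀ := fun s hs hne =>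
    (hmax hs).lt_of_ne fun heq => hne <| (h.strictConcaveOn_scaledL hμ hF).eq_of_isMaxOn
      (fun t ht => (hmax ht).trans_eq heq.symm) hmax hs hs₀
  obtain ⟨s, hs, hpos⟩ := exists_scaledL_pos hsupp hF1 hF2 (h.lt_one hμ) hEF h.mem_Ioc.1
  have hpos₀ : 0 < scaledL F μ s₀ := hpos.trans_le (hmax hs)
  refine ⟨s₀, hs₀, hstrict, hpos₀, ?_⟩
  rcases (hs₀.2.trans h.mem_Ioc.2).eq_or_lt with rfl | hs₀1
  · rw [scaledLDeriv_one, one_mul]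
  -- an interior maximum: `s₀ = 0` has value `0`, and `s₀ = σ < 1` would lie in the tail
  have hs₀0 : 0 < s₀ := hs₀.1.lt_of_ne fun h0 => by simp [← h0] at hpos₀
  have hs₀σ : s₀ < σ := hs₀.2.lt_of_ne fun hσ => by
    have := h.tail μ hμ (hσ ▸ hs₀1) s₀ ⟨hσ.ge, hs₀1.le⟩
    rw [h.LL_eq_scaledL hμ hs₀] at this
    exact (EReal.coe_le_coe_iff.1 this).not_gt hpos₀
  exact scaledLDeriv_eq_of_isLocalMax hsupp hF1 (h.lt_one hμ) ⟨hs₀0, hs₀1⟩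
    (hmax.localize.isLocalMax (Icc_mem_nhds hs₀0 hs₀σ))

lemma Dtilde_eq_sSup [IsProbabilityMeasure F] (h : AdmissibleCutoff F a b σ) (hμ : μ ∈ Ioo a b) :
    Dtilde F μ = sSup (scaledL F μ '' Icc 0 σ) := by
  obtain ⟨s', hs', hsup, hmax⟩ := isCompact_Icc.exists_sSup_image_eq_and_ge
    (nonempty_Icc.2 h.mem_Ioc.1.le) (h.continuousOn_scaledL.uncurry_left (f := scaledL F) μ hμ)
  rw [Dtilde_eq_iSup (h.lt_one hμ), hsup]
  refine le_antisymm (iSup₂_le fun s hs => ?_) ?_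
  · by_cases hsσ : s ≤ σ
    · rw [h.LL_eq_scaledL hμ ⟨hs.1, hsσ⟩, EReal.coe_le_coe_iff]
      exact hmax s ⟨hs.1, hsσ⟩
    · refine (h.tail μ hμ ((not_le.1 hsσ).trans_le hs.2) s ⟨(not_le.1 hsσ).le, hs.2⟩).trans ?_
      exact EReal.coe_nonneg.2 <|
        scaledL_zero (F := F) (μ := μ) ▸ hmax 0 ⟨le_rfl, h.mem_Ioc.1.le⟩
  · exact le_iSup₂_of_le s' ⟨hs'.1, hs'.2.trans h.mem_Ioc.2⟩ (h.LL_eq_scaledL hμ hs').ge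

lemma LL_lt_of_ne [IsProbabilityMeasure F] (h : AdmissibleCutoff F a b σ) (hμ : μ ∈ Ioo a b)
    (hs₀ : s₀ ∈ Icc 0 σ)
    (hstrict : ∀ s ∈ Icc 0 σ, s ≠ s₀ → scaledL F μ s < scaledL F μ s₀)
    (hpos : 0 < scaledL F μ s₀) :
    ∀ ν ∈ Icc 0 (1 - μ)⁻¹, ν ≠ s₀ * (1 - μ)⁻¹ → LL F μ ν < LL F μ (s₀ * (1 - μ)⁻¹) := by
  rw [← image_mul_inv_Icc (h.lt_one hμ)]
  rintro _ ⟨s, hs, rfl⟩ hne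
  have hss₀ : s ≠ s₀ := fun heq => hne (heq ▸ rfl)
  rw [h.LL_eq_scaledL hμ hs₀]
  by_cases hsσ : s ≤ σ
  · rw [h.LL_eq_scaledL hμ ⟨hs.1, hsσ⟩, EReal.coe_lt_coe_iff]
    exact hstrict s ⟨hs.1, hsσ⟩ hss₀
  · exact (h.tail μ hμ ((not_le.1 hsσ).trans_le hs.2) s ⟨(not_le.1 hsσ).le, hs.2⟩).trans_lt
      (EReal.coe_pos.2 hpos)

lemma hasDerivAt_Dtilde [IsProbabilityMeasure F] (h : AdmissibleCutoff F a b σ)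
    (hsupp : F (Ioi 1) = 0) (hμ : μ ∈ Ioo a b) (hs₀ : s₀ ∈ Icc 0 σ)
    (hstrict : ∀ s ∈ Icc 0 σ, s ≠ s₀ → scaledL F μ s < scaledL F μ s₀) :
    HasDerivAt (fun μ' => (Dtilde F μ').toReal) (scaledLDeriv F μ s₀) μ := by
  refine (hasDerivAt_sSup_image_of_strictMax isCompact_Icc (Ioo_mem_nhds hμ.1 hμ.2)
    h.continuousOn_scaledL (fun s hs μ' hμ' => h.hasDerivAt_scaledL hsupp hμ' hs)
    (h.continuousOn_scaledLDeriv hsupp _ (mk_mem_prod hμ hs₀)) hs₀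
    hstrict).congr_of_eventuallyEq ?_
  filter_upwards [Ioo_mem_nhds hμ.1 hμ.2] with μ' hμ'
  rw [h.Dtilde_eq_sSup hμ', EReal.toReal_coe]

end AdmissibleCutoff

/-- Exactly the condition for `L(1/(1-μ); F, μ) > -∞`. -/
def LogIntegrableAtOne (F : Measure ℝ) : Prop :=
  F {x | 1 ≤ x} = 0 ∧ Integrable (fun x => log (1 - x)) F

lemma LL_inv_eq_bot [IsProbabilityMeasure F] (hμ : μ < 1) (hF : ¬ LogIntegrableAtOne F) :
    LL F μ (1 - μ)⁻¹ = ⊥ := by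
  have := LL_mul_inv_eq (F := F) hμ 1
  simp only [one_mul, arg_one, sub_nonpos] at this
  exact this.trans (if_neg fun h => hF ⟨h.2, h.1⟩)

lemma min_le_arg (hs : s ∈ Icc 0 1) : min (1 - μ) (1 - x) ≤ arg μ s x := by
  rw [arg_eq]
  nlinarith [hs.1, hs.2, min_le_left (1 - μ) (1 - x), min_le_right (1 - μ) (1 - x)]

lemma admissibleCutoff_one [IsProbabilityMeasure F] (hF1 : Integrable (fun x => x) F) (hb : b < 1)
    (hF : LogIntegrableAtOne F) : AdmissibleCutoff F a b 1 := by
  have hlt : ∀ᵐ x ∂F, x < 1 :=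
    (measure_eq_zero_iff_ae_notMem.1 hF.1).mono fun x hx => not_le.1 hx
  refine ⟨hb, ⟨one_pos, le_rfl⟩, ?_,
    ⟨fun x => |log (1 - x)| + |log (1 - b)| + (1 - a) + (1 - x),
    ((hF.2.abs.add (integrable_const _)).add (integrable_const _)).add
      ((integrable_const 1).sub hF1), ?_⟩, fun _ _ h => absurd h (lt_irrefl 1)⟩
  · filter_upwards [hlt] with x hx μ hμ s hs
    exact (lt_min (sub_pos.2 (hμ.2.trans hb)) (sub_pos.2 hx)).trans_le (min_le_arg hs)
  · filter_upwards [hlt] with x hx μ hμ s hs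
    have h1μ : 1 - b < 1 - μ := by linarith [hμ.2]
    have hmin : 0 < min (1 - μ) (1 - x) := lt_min (by linarith [hμ.2, hb]) (sub_pos.2 hx)
    have hlow : -(|log (1 - b)| + |log (1 - x)|) ≤ log (arg μ s x) := by
      have harg := min_le_arg (μ := μ) (x := x) hs
      rcases min_choice (1 - μ) (1 - x) with h | h <;> rw [h] at harg
      · have := log_le_log (by linarith [hb]) (h1μ.le.trans harg)
        linarith [neg_abs_le (log (1 - b)), abs_nonneg (log (1 - x))]
      · have := log_le_log (sub_pos.2 hx) harg
        linarith [neg_abs_le (log (1 - x)), abs_nonneg (log (1 - b))]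
    have hup : log (arg μ s x) ≤ (1 - μ) + (1 - x) :=
      (log_le_sub_one_of_pos (hmin.trans_le (min_le_arg hs))).trans
        (by linarith [arg_le_add hx.le (hμ.2.trans hb).le hs (μ := μ)])
    rw [abs_le]
    constructor <;> linarith [abs_nonneg (log (1 - x)), abs_nonneg (log (1 - b)), hμ.1, hμ.2]

lemma admissibleCutoff_of_lt_one [IsProbabilityMeasure F] (hsupp : F (Ioi 1) = 0)
    (hF1 : Integrable (fun x => x) F) (hb : b < 1) (hσ : σ ∈ Ioo 0 1)
    (htail : ∀ μ ∈ Ioo a b, ∀ s ∈ Icc σ 1, LL F μ (s * (1 - μ)⁻¹) ≤ 0) :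
    AdmissibleCutoff F a b σ := by
  have hc : 0 < (1 - σ) * (1 - b) := mul_pos (sub_pos.2 hσ.2) (sub_pos.2 hb)
  refine ⟨hb, ⟨hσ.1, hσ.2.le⟩, ?_, ⟨fun x => |log ((1 - σ) * (1 - b))| + (1 - a) + (1 - x),
    (integrable_const _).add ((integrable_const 1).sub hF1), ?_⟩,
    fun μ hμ _ s hs => htail μ hμ s hs⟩
  · filter_upwards [ae_le_of_measure_Ioi_eq_zero hsupp] with x hx μ hμ s hs
    exact arg_pos hx (hμ.2.trans hb) ⟨hs.1, hs.2.trans_lt hσ.2⟩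
  · filter_upwards [ae_le_of_measure_Ioi_eq_zero hsupp] with x hx μ hμ s hs
    have hcarg : (1 - σ) * (1 - b) ≤ arg μ s x :=
      (mul_le_mul (by linarith [hs.2]) (by linarith [hμ.2]) (sub_pos.2 hb).le
        (by linarith [hs.1, hs.2, hσ.2])).trans (le_arg hx hs.1)
    have := arg_le_add hx (hμ.2.trans hb).le ⟨hs.1, hs.2.trans hσ.2.le⟩ (μ := μ)
    linarith [abs_log_le_abs_log_add hc hcarg, hμ.1]

lemma integrable_log_add_max [IsProbabilityMeasure F] (hF1 : Integrable (fun x => x) F)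
    (hc : 0 < c) :
    Integrable (fun x => log (c + max (1 - x) 0)) F := by
  refine ((integrable_const (|log c| + c + 1)).add hF1.abs).mono'
    (Measurable.log (by fun_prop)).aestronglyMeasurable (Eventually.of_forall fun x => ?_)
  have := abs_log_le_abs_log_add hc (le_add_of_nonneg_right (le_max_right (1 - x) 0))
  have : max (1 - x) 0 ≤ 1 + |x| := max_le (by linarith [neg_abs_le x]) (by positivity)
  rw [Real.norm_eq_abs, Pi.add_apply]
  linarith

noncomputable def logGap (n : ℕ) (x : ℝ) : ℝ :=
  log (1 + max (1 - x) 0) - log (1 / (n + 1) + max (1 - x) 0)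

lemma measurable_logGap (n : ℕ) : Measurable (logGap n) :=
  (Measurable.log (by fun_prop)).sub (Measurable.log (by fun_prop))

lemma integrable_logGap [IsProbabilityMeasure F] (hF1 : Integrable (fun x => x) F) (n : ℕ) :
    Integrable (logGap n) F :=
  (integrable_log_add_max hF1 one_pos).sub (integrable_log_add_max hF1 (by positivity))

lemma logGap_nonneg (n : ℕ) (x : ℝ) : 0 ≤ logGap n x := by
  have : 1 / ((n : ℝ) + 1) ≤ 1 := by
    rw [div_le_one (by positivity)]; linarith [(Nat.cast_nonneg n : (0 : ℝ) ≤ n)]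
  exact sub_nonneg.2 <| log_le_log (by positivity) (by gcongr)

lemma monotone_logGap (x : ℝ) : Monotone (logGap · x) := fun m n hmn =>
  sub_le_sub_left (log_le_log (by positivity) (by gcongr)) _

lemma tendsto_logGap (hx : x < 1) :
    Tendsto (logGap · x) atTop (𝓝 (log (1 + (1 - x)) - log (1 - x))) := by
  simp only [logGap, max_eq_left (sub_pos.2 hx).le]
  simpa using ((tendsto_one_div_add_atTop_nhds_zero_nat.add_const (1 - x)).log
    (by simpa using (sub_pos.2 hx).ne')).const_sub (log (1 + (1 - x)))

lemma tendsto_logGap_atTop (hx : 1 ≤ x) : Tendsto (logGap · x) atTop atTop := by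
  have : ∀ n : ℕ, logGap n x = log (n + 1) := fun n => by
    simp [logGap, max_eq_right (sub_nonpos.2 hx)]
  simp only [this]
  exact tendsto_log_atTop.comp (tendsto_natCast_atTop_atTop.atTop_add tendsto_const_nhds)

/-- Monotone convergence: `logGap n x` increases to `log (2 - x) - log (1 - x)` for `x < 1` and
to `∞` for `1 ≤ x`. -/
lemma logIntegrableAtOne_of_le_integral [IsProbabilityMeasure F]
    (hF1 : Integrable (fun x => x) F) {R : ℝ}
    (hR : ∀ n : ℕ, R ≤ ∫ x, log (1 / (n + 1) + max (1 - x) 0) ∂F) : LogIntegrableAtOne F := by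
  have hmeas : ∀ n, Measurable fun x => ENNReal.ofReal (logGap n x) := fun n =>
    (measurable_logGap n).ennreal_ofReal
  have hfin : ∫⁻ x, ⨆ n, ENNReal.ofReal (logGap n x) ∂F ≠ ∞ := by
    rw [lintegral_iSup hmeas fun m n hmn x => ENNReal.ofReal_le_ofReal (monotone_logGap x hmn)]
    refine ne_top_of_le_ne_top
      (ENNReal.ofReal_ne_top (r := ∫ x, log (1 + max (1 - x) 0) ∂F - R)) (iSup_le fun n => ?_)
    rw [← ofReal_integral_eq_lintegral_ofReal (integrable_logGap hF1 n)
      (ae_of_all _ (logGap_nonneg n))]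
    refine ENNReal.ofReal_le_ofReal ?_
    simp only [logGap]
    rw [integral_sub (integrable_log_add_max hF1 one_pos)
      (integrable_log_add_max hF1 (by positivity))]
    exact sub_le_sub_left (hR n) _
  have hlt : ∀ᵐ x ∂F, x < 1 := by
    filter_upwards [ae_lt_top (Measurable.iSup hmeas) hfin] with x hx
    by_contra! h1
    exact hx.ne <| top_le_iff.1 <| le_of_tendsto'
      (ENNReal.tendsto_ofReal_atTop.comp (tendsto_logGap_atTop h1))
      fun n => le_iSup (fun n => ENNReal.ofReal (logGap n x)) n
  refine ⟨measure_eq_zero_iff_ae_notMem.2 (hlt.mono fun x hx => not_le.2 hx), ?_⟩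
  set H := fun x => log (1 + (1 - x)) - log (1 - x)
  have hH : Integrable H F := by
    refine (lintegral_ofReal_ne_top_iff_integrable (Measurable.aestronglyMeasurable (by
      unfold H; fun_prop)) ?_).1 (ne_top_of_le_ne_top hfin (lintegral_mono_ae ?_))
    · filter_upwards [hlt] with x hx
      exact sub_nonneg.2 (log_le_log (sub_pos.2 hx) (by linarith))
    · filter_upwards [hlt] with x hx
      exact le_of_tendsto' (ENNReal.tendsto_ofReal (tendsto_logGap hx))
        fun n => le_iSup (fun n => ENNReal.ofReal (logGap n x)) n
  refine ((integrable_log_add_max hF1 one_pos).sub hH).congr ?_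
  filter_upwards [hlt] with x hx
  simp [H, max_eq_left (sub_pos.2 hx).le]

lemma exists_scaledL_nonpos [IsProbabilityMeasure F] (hsupp : F (Ioi 1) = 0)
    (hF1 : Integrable (fun x => x) F) (hb : b < 1) (hF : ¬ LogIntegrableAtOne F) :
    ∃ σ ∈ Ioo 0 1, ∀ μ ∈ Ioo a b, ∀ s ∈ Ico σ 1, scaledL F μ s ≤ 0 := by
  obtain ⟨n, hn⟩ : ∃ n : ℕ, ∫ x, log (1 / (n + 1) + max (1 - x) 0) ∂F < log (1 - b) := by
    by_contra! h
    exact hF (logIntegrableAtOne_of_le_integral hF1 h)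
  set u : ℝ := 1 / (n + 1)
  have hu : 0 < u / (1 + |a|) := by positivity
  refine ⟨max (1 / 2) (1 - u / (1 + |a|)), ⟨by positivity, max_lt (by norm_num) (by linarith)⟩,
    fun μ hμ s hs => ?_⟩
  have hs0 : 0 ≤ s := le_trans (by positivity) hs.1
  have hμ1 : μ < 1 := hμ.2.trans hb
  -- near `s = 1`, `arg μ s x ≤ u + (1 - x)`, uniformly in `μ ∈ (a, b)`
  have hsu : (1 - s) * (1 - μ) ≤ u := by
    have h1 : 1 - s ≤ u / (1 + |a|) := by
      linarith [le_max_right (1 / 2) (1 - u / (1 + |a|)), hs.1]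
    calc (1 - s) * (1 - μ) ≤ u / (1 + |a|) * (1 + |a|) :=
          mul_le_mul h1 (by linarith [hμ.1, neg_abs_le a]) (by linarith [hμ1]) hu.le
      _ = u := div_mul_cancel₀ _ (by positivity)
  have hle := integral_mono_ae (integrable_log_arg hsupp hF1 hμ1 ⟨hs0, hs.2⟩)
    (integrable_log_add_max hF1 (by positivity : 0 < u)) <| by
      filter_upwards [ae_le_of_measure_Ioi_eq_zero hsupp] with x hx
      refine log_le_log (arg_pos hx hμ1 ⟨hs0, hs.2⟩) ?_
      rw [arg_eq, max_eq_left (sub_nonneg.2 hx)]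
      nlinarith [hs.2]
  have := log_le_log (sub_pos.2 hb) (by linarith [hμ.2] : 1 - b ≤ 1 - μ)
  rw [scaledL]
  linarith

lemma exists_admissibleCutoff [IsProbabilityMeasure F] (hsupp : F (Ioi 1) = 0)
    (hF1 : Integrable (fun x => x) F) (hb : b < 1) : ∃ σ, AdmissibleCutoff F a b σ := by
  by_cases hF : LogIntegrableAtOne F
  · exact ⟨1, admissibleCutoff_one hF1 hb hF⟩
  obtain ⟨σ, hσ, hneg⟩ := exists_scaledL_nonpos (a := a) hsupp hF1 hb hF
  refine ⟨σ, admissibleCutoff_of_lt_one hsupp hF1 hb hσ fun μ hμ s hs => ?_⟩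
  have hμ1 := hμ.2.trans hb
  rcases hs.2.lt_or_eq with hs1 | rfl
  · have hs' : s ∈ Ico 0 1 := ⟨hσ.1.le.trans hs.1, hs1⟩
    rw [LL_mul_inv_eq_scaledL hμ1 (integrable_log_arg hsupp hF1 hμ1 hs')
      ((ae_le_of_measure_Ioi_eq_zero hsupp).mono fun x hx => arg_pos hx hμ1 hs')]
    exact EReal.coe_nonpos.2 (hneg μ hμ s ⟨hs.1, hs1⟩)
  · rw [one_mul, LL_inv_eq_bot hμ1 hF]
    exact bot_le

end Dtilde

/-- (Lemma `lem_bibun`.) For `E(F) < μ < 1` the map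
`μ' ↦ D̃_inf(F,μ')` is differentiable at `μ` with derivative `ν*(F,μ)`, the unique
maximizer of `L(·;F,μ)` on `[0,1/(1-μ)]`; in particular the derivative is at most
`1/(1-μ)`. -/
theorem stmt7 (F : Measure ℝ) [IsProbabilityMeasure F] (hsupp : F (Set.Ioi 1) = 0)
    (hmgf : MGFNearZero F) (μ : ℝ) (hEF : ∫ x, x ∂F < μ) (hμ : μ < 1) :
    ∃ ν' ∈ Set.Icc (0 : ℝ) (1 - μ)⁻¹,
      (∀ ν ∈ Set.Icc (0 : ℝ) (1 - μ)⁻¹, LL F μ ν ≤ LL F μ ν') ∧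
      (∀ ν'' ∈ Set.Icc (0 : ℝ) (1 - μ)⁻¹,
        (∀ ν ∈ Set.Icc (0 : ℝ) (1 - μ)⁻¹, LL F μ ν ≤ LL F μ ν'') → ν'' = ν') ∧
      HasDerivAt (fun μ' => (Dtilde F μ').toReal) ν' μ ∧ ν' ≤ (1 - μ)⁻¹ := by
  have hF1 : Integrable (fun x => x) F := by simpa using hmgf.integrable_pow 1
  have hμab : μ ∈ Ioo (μ - 1) ((μ + 1) / 2) := ⟨by linarith, by linarith⟩
  obtain ⟨σ, h⟩ :=
    Dtilde.exists_admissibleCutoff (a := μ - 1) hsupp hF1 (by linarith : (μ + 1) / 2 < 1)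
  obtain ⟨s₀, hs₀, hstrict, hpos, hderiv⟩ :=
    h.exists_strictMax_scaledL hsupp hF1 (hmgf.integrable_pow 2) hμab hEF
  have hν : s₀ * (1 - μ)⁻¹ ∈ Icc 0 (1 - μ)⁻¹ :=
    Dtilde.image_mul_inv_Icc hμ ▸ mem_image_of_mem _ ⟨hs₀.1, hs₀.2.trans h.mem_Ioc.2⟩
  have hlt := h.LL_lt_of_ne hμab hs₀ hstrict hpos
  refine ⟨_, hν, fun ν hν' => ?_, fun ν'' hν'' hmax => ?_,
    hderiv ▸ h.hasDerivAt_Dtilde hsupp hμab hs₀ hstrict, hν.2⟩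
  · rcases eq_or_ne ν (s₀ * (1 - μ)⁻¹) with rfl | hne
    exacts [le_rfl, (hlt ν hν' hne).le]
  · by_contra hne
    exact (hlt ν'' hν'' hne).not_ge (hmax _ hν)
end

section
/- Fix real numbers μ < 1, μ̃ < 1 and ε > 0. There exists a real number a(ε) such that for every a ≤ a(ε) and every probability measure F supported in (-∞,1] with finite mean satisfying E(F) ≥ μ̃, one has |D̃_inf(F_{(a)},μ) − D̃_inf(F,μ)| ≤ ε. -/
open MeasureTheory ProbabilityTheory Set Filter
open scoped ENNReal NNReal Classical BoundedContinuousFunction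

/-!
For `ν ≥ 0` the integrand `log (1 - (x - μ) ν)` is antitone in `x`, and clipping at `a` only
raises the sample, so `L(ν; F_(a), μ) ≤ L(ν; F, μ)`. Conversely, when `ν (1 - μ) ≤ 1` and
`x ≤ 1`, clipping lowers the integrand by at most `(1 - x) / (1 - a)` (by `log t ≤ t - 1`), so
`L(ν; F, μ) ≤ L(ν; F_(a), μ) + (1 - E F) / (1 - a)`, and `(1 - E F) / (1 - a) ≤ ε` once
`a ≤ 1 - (1 - μ̃) / ε`. In both directions the two pointwise bounds sandwich one integrand
between integrable functions, so finiteness of `L` transfers along with the inequality.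
-/

section LogFactor

variable {μ ν a x : ℝ}

lemma one_sub_mul_pos_of_lt_one (ha : a < 1) (hν : 0 ≤ ν) (hνμ : ν * (1 - μ) ≤ 1) :
    0 < 1 - (a - μ) * ν := by
  rcases hν.eq_or_lt with rfl | hν
  · simp
  nlinarith [mul_pos hν (sub_pos.mpr ha)]

lemma log_one_sub_mul_max_le (hν : 0 ≤ ν) (h : 0 < 1 - (max a x - μ) * ν) :
    Real.log (1 - (max a x - μ) * ν) ≤ Real.log (1 - (x - μ) * ν) :=
  Real.log_le_log h (by nlinarith [le_max_right a x])

lemma log_one_sub_mul_le (h : 0 < 1 - (x - μ) * ν) :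
    Real.log (1 - (x - μ) * ν) ≤ (μ - x) * ν := by
  linarith [Real.log_le_sub_one_of_pos h]

lemma log_one_sub_mul_le_log_max_add (ha : a < 1) (hν : 0 ≤ ν) (hνμ : ν * (1 - μ) ≤ 1)
    (hx : x ≤ 1) (h : 0 < 1 - (x - μ) * ν) :
    Real.log (1 - (x - μ) * ν) ≤ Real.log (1 - (max a x - μ) * ν) + (1 - x) / (1 - a) := by
  have h1a : 0 < 1 - a := by linarith
  rcases le_or_gt a x with hax | hxa
  · rw [max_eq_right hax]
    linarith [div_nonneg (sub_nonneg.mpr hx) h1a.le]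
  rw [max_eq_left hxa.le]
  have hQ := one_sub_mul_pos_of_lt_one ha hν hνμ
  -- With `p = 1 - (x - μ) ν`, `q = 1 - (a - μ) ν`: `log (p / q) ≤ (p - q) / q = (a - x) ν / q`,
  -- and `q ≥ (1 - a) ν` since `ν (1 - μ) ≤ 1`.
  have hlog := Real.log_le_sub_one_of_pos (div_pos h hQ)
  rw [Real.log_div h.ne' hQ.ne', div_sub_one hQ.ne'] at hlog
  have hfrac : (1 - (x - μ) * ν - (1 - (a - μ) * ν)) / (1 - (a - μ) * ν) ≤ (1 - x) / (1 - a) := by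
    rw [div_le_div_iff₀ hQ h1a]
    nlinarith [mul_nonneg (sub_nonneg.mpr hxa.le) (sub_nonneg.mpr hνμ), mul_nonneg h1a.le hQ.le]
  linarith

end LogFactor

section LL

variable {F : Measure ℝ} {μ ν a : ℝ}

lemma LL_eq_ite :
    LL F μ ν = if Integrable (fun x => Real.log (1 - (x - μ) * ν)) F ∧
        ∀ᵐ x ∂F, 0 < 1 - (x - μ) * ν
      then ((∫ x, Real.log (1 - (x - μ) * ν) ∂F : ℝ) : EReal) else ⊥ := by
  simp only [LL, ae_iff, not_lt]

lemma LL_map_eq_ite {φ : ℝ → ℝ} (hφ : Measurable φ) :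
    LL (F.map φ) μ ν = if Integrable (fun x => Real.log (1 - (φ x - μ) * ν)) F ∧
        ∀ᵐ x ∂F, 0 < 1 - (φ x - μ) * ν
      then ((∫ x, Real.log (1 - (φ x - μ) * ν) ∂F : ℝ) : EReal) else ⊥ := by
  have hg : Measurable fun x : ℝ => Real.log (1 - (x - μ) * ν) := by fun_prop
  rw [LL_eq_ite, integrable_map_measure hg.aestronglyMeasurable hφ.aemeasurable,
    ae_map_iff hφ.aemeasurable (measurableSet_lt (by fun_prop) (by fun_prop)),
    integral_map hφ.aemeasurable hg.aestronglyMeasurable]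
  rfl

lemma LL_map_max_le [IsFiniteMeasure F] (hν : 0 ≤ ν) (hF : Integrable (fun x : ℝ => x) F) :
    LL (F.map fun x => max a x) μ ν ≤ LL F μ ν := by
  rw [LL_map_eq_ite (by fun_prop), LL_eq_ite]
  by_cases h : Integrable (fun x => Real.log (1 - (max a x - μ) * ν)) F ∧
      ∀ᵐ x ∂F, 0 < 1 - (max a x - μ) * ν
  swap
  · rw [if_neg h]
    exact bot_le
  obtain ⟨hint, hpos⟩ := h
  have hpos' : ∀ᵐ x ∂F, 0 < 1 - (x - μ) * ν :=
    hpos.mono fun x hx => by nlinarith [le_max_right a x]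
  have hle : ∀ᵐ x ∂F, Real.log (1 - (max a x - μ) * ν) ≤ Real.log (1 - (x - μ) * ν) :=
    hpos.mono fun x hx => log_one_sub_mul_max_le hν hx
  have hint' : Integrable (fun x => Real.log (1 - (x - μ) * ν)) F :=
    integrable_of_le_of_le (by fun_prop : Measurable _).aestronglyMeasurable hle (hpos'.mono fun x hx => log_one_sub_mul_le hx)
      hint (((integrable_const μ).sub hF).mul_const ν)
  rw [if_pos ⟨hint, hpos⟩, if_pos ⟨hint', hpos'⟩]
  exact EReal.coe_le_coe_iff.mpr (integral_mono_ae hint hint' hle)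

lemma LL_le_LL_map_max_add [IsProbabilityMeasure F] (ha : a < 1) (hν : 0 ≤ ν)
    (hνμ : ν * (1 - μ) ≤ 1) (hsupp : F (Ioi 1) = 0) (hF : Integrable (fun x : ℝ => x) F) :
    LL F μ ν ≤ LL (F.map fun x => max a x) μ ν + ((1 - ∫ x, x ∂F) / (1 - a) : ℝ) := by
  rw [LL_map_eq_ite (by fun_prop), LL_eq_ite]
  by_cases h : Integrable (fun x => Real.log (1 - (x - μ) * ν)) F ∧
      ∀ᵐ x ∂F, 0 < 1 - (x - μ) * ν
  swap
  · rw [if_neg h]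
    exact bot_le
  obtain ⟨hint, hpos⟩ := h
  have hle1 : ∀ᵐ x ∂F, x ≤ 1 := by
    rw [ae_iff]
    simp only [not_le]
    exact hsupp
  have hpos' : ∀ᵐ x ∂F, 0 < 1 - (max a x - μ) * ν := hpos.mono fun x hx => by
    rcases max_choice a x with h | h <;> rw [h]
    exacts [one_sub_mul_pos_of_lt_one ha hν hνμ, hx]
  have hkey : ∀ᵐ x ∂F, Real.log (1 - (x - μ) * ν) ≤
      Real.log (1 - (max a x - μ) * ν) + (1 - x) / (1 - a) := by
    filter_upwards [hpos, hle1] with x hx hx1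
    exact log_one_sub_mul_le_log_max_add ha hν hνμ hx1 hx
  have hdev : Integrable (fun x => (1 - x) / (1 - a)) F :=
    ((integrable_const 1).sub hF).div_const _
  have hint' : Integrable (fun x => Real.log (1 - (max a x - μ) * ν)) F :=
    integrable_of_le_of_le (by fun_prop : Measurable _).aestronglyMeasurable (hkey.mono fun x hx => by simp only [Pi.sub_apply]; linarith)
      (hpos'.mono fun x hx => log_one_sub_mul_max_le hν hx) (hint.sub hdev) hint
  rw [if_pos ⟨hint, hpos⟩, if_pos ⟨hint', hpos'⟩, ← EReal.coe_add, EReal.coe_le_coe_iff]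
  calc ∫ x, Real.log (1 - (x - μ) * ν) ∂F
      ≤ ∫ x, (Real.log (1 - (max a x - μ) * ν) + (1 - x) / (1 - a)) ∂F :=
        integral_mono_ae hint (hint'.add hdev) hkey
    _ = _ := by
        rw [integral_add hint' hdev, integral_div, integral_sub (integrable_const 1) hF]
        simp

lemma Dtilde_map_max_le [IsFiniteMeasure F] (hF : Integrable (fun x : ℝ => x) F) :
    Dtilde (F.map fun x => max a x) μ ≤ Dtilde F μ :=
  iSup₂_mono fun _ hν => LL_map_max_le hν.1 hF

lemma Dtilde_le_Dtilde_map_max_add [IsProbabilityMeasure F] (hμ : μ < 1) (ha : a < 1)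
    (hsupp : F (Ioi 1) = 0) (hF : Integrable (fun x : ℝ => x) F) :
    Dtilde F μ ≤ Dtilde (F.map fun x => max a x) μ + ((1 - ∫ x, x ∂F) / (1 - a) : ℝ) := by
  refine iSup₂_le fun ν hν => ?_
  have hνμ : ν * (1 - μ) ≤ 1 := (le_div_iff₀ (by linarith)).mp (by rw [one_div]; exact hν.2)
  exact (LL_le_LL_map_max_add ha hν.1 hνμ hsupp hF).trans
    (add_le_add_left (le_iSup₂ (f := fun ν (_ : ν ∈ Icc (0 : ℝ) (1 - μ)⁻¹) =>
      LL (F.map fun x => max a x) μ ν) ν hν) _)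

end LL

/-- (Lemma `lem_fa`.) Fix `μ, μ̃ < 1` and `ε > 0`. There exists
`a(ε)` such that for every `a ≤ a(ε)` and every probability measure `F` supported in
`(-∞,1]` with finite mean `E(F) ≥ μ̃`, one has `|D̃_inf(F_{(a)},μ) - D̃_inf(F,μ)| ≤ ε`,
where `F_{(a)}` is the pushforward of `F` under `x ↦ max a x`. -/
theorem stmt8 (μ μt ε : ℝ) (hμ : μ < 1) (hμt : μt < 1) (hε : 0 < ε) :
    ∃ A : ℝ, ∀ a ≤ A, ∀ F : Measure ℝ, IsProbabilityMeasure F → F (Set.Ioi 1) = 0 →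
      Integrable (fun x : ℝ => x) F → μt ≤ ∫ x, x ∂F →
      Dtilde (Measure.map (fun x => max a x) F) μ ≤ Dtilde F μ + (ε : EReal) ∧
      Dtilde F μ ≤ Dtilde (Measure.map (fun x => max a x) F) μ + (ε : EReal) := by
  have hA : 0 < (1 - μt) / ε := div_pos (sub_pos.mpr hμt) hε
  refine ⟨1 - (1 - μt) / ε, fun a ha F _ hsupp hF hmean => ⟨?_, ?_⟩⟩
  · exact (Dtilde_map_max_le hF).trans (le_add_of_nonneg_right (by exact_mod_cast hε.le))
  have h1a : 0 < 1 - a := by linarith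
  have hdev : (1 - ∫ x, x ∂F) / (1 - a) ≤ ε := by
    rw [div_le_iff₀ h1a]
    have := (div_le_iff₀ hε).mp (show (1 - μt) / ε ≤ 1 - a by linarith)
    nlinarith
  exact (Dtilde_le_Dtilde_map_max_add hμ (by linarith) hsupp hF).trans
    (add_le_add_right (EReal.coe_le_coe_iff.mpr hdev) _)
end
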